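/- arXiv:2006.09424 — 10 statements merged into one kernel-verified Lean document; each statement's English description precedes it below -/
import Mathlib

section
/- Let Ω ⊆ ℝ be a measurable set, let I ⊆ Ω be a measurable subset, let ξ ∈ ℂ, and let f : ℝⁿ → ℂ be a function that is symmetric under every permutation of its n arguments and integrable on Ωⁿ. For z = (z₁,…,zₙ) let σ_I(z) denote the number of indices i with zᵢ ∈ I. Then ∫_{Ωⁿ} ξ^{σ_I(z)} f(z₁,…,zₙ) dz₁⋯dzₙ = Σ_{j=0}^{n} C(n,j) (ξ−1)^j ∫_I dz₁ ⋯ ∫_I dz_j ∫_Ω dz_{j+1} ⋯ ∫_Ω dzₙ f(z₁,…,zₙ), where C(n,j) is the binomial coefficient. -/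
/-!
Writing `ξ = (ξ - 1) + 1` in each factor of `ξ ^ σ_I(z) = ∏_{i : zᵢ ∈ I} ξ` gives
`ξ ^ σ_I(z) = ∑_S (ξ - 1) ^ |S| · 1[zᵢ ∈ I for all i ∈ S]`, the sum running over all sets of
indices `S`. Integrating over `Ωⁿ`, the term of `S` is `(ξ - 1) ^ |S|` times the integral of `f`
over the box with factor `I` at the indices in `S` and `Ω` elsewhere (as `I ⊆ Ω`). Since `f` is
symmetric, a permutation of coordinates shows that this integral depends only on `|S|`, and the
`C(n, j)` sets of size `j` give the binomial coefficients.
-/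

open MeasureTheory Finset

theorem pow_card_eq_sum_powerset_sub_one_pow {ι R : Type*} [CommRing R] (ξ : R) (s : Finset ι) :
    ξ ^ #s = ∑ S ∈ s.powerset, (ξ - 1) ^ #S := by
  simpa using prod_add_one (f := fun _ => ξ - 1) s

section Expansion

variable {ι α : Type*} [Fintype ι]

theorem pow_ncard_mul_eq_sum_indicator_pi {R : Type*} [CommRing R] (I : Set α) (ξ : R)
    (f : (ι → α) → R) (z : ι → α) :
    ξ ^ {i | z i ∈ I}.ncard * f z
      = ∑ S : Finset ι, (ξ - 1) ^ #S * ((S : Set ι).pi fun _ => I).indicator f z := by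
  classical
  rw [Set.ncard_eq_toFinset_card', Set.toFinset_ofPred, pow_card_eq_sum_powerset_sub_one_pow,
    sum_mul, ← filter_subset_univ, sum_filter]
  refine sum_congr rfl fun S _ => ?_
  have hmem : S ⊆ ({i | z i ∈ I} : Finset ι) ↔ z ∈ (S : Set ι).pi fun _ => I := by
    simp [subset_iff, Set.mem_pi]
  rw [Set.indicator_apply, if_congr hmem rfl rfl]
  split_ifs <;> simp

theorem setIntegral_pow_ncard_mul_eq_sum [MeasurableSpace α] {𝕜 : Type*} [RCLike 𝕜]
    {μ : Measure (ι → α)} {I : Set α} (hI : MeasurableSet I) {A : Set (ι → α)}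
    {f : (ι → α) → 𝕜} (hf : IntegrableOn f A μ) (ξ : 𝕜) :
    ∫ z in A, ξ ^ {i | z i ∈ I}.ncard * f z ∂μ
      = ∑ S : Finset ι, (ξ - 1) ^ #S * ∫ z in A ∩ (S : Set ι).pi fun _ => I, f z ∂μ := by
  have hpi : ∀ S : Finset ι, MeasurableSet ((S : Set ι).pi fun _ => I) := fun S =>
    .pi S.countable_toSet fun _ _ => hI
  simp_rw [pow_ncard_mul_eq_sum_indicator_pi I ξ f]
  rw [integral_finsetSum _ fun S _ => (hf.indicator (hpi S)).const_mul _]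
  simp_rw [integral_const_mul, setIntegral_indicator (hpi _)]

end Expansion

theorem Set.univ_pi_inter_pi_eq_univ_pi_ite {ι : Type*} {α : ι → Type*} (S : Set ι)
    [DecidablePred (· ∈ S)] {s t : ∀ i, Set (α i)} (hts : ∀ i ∈ S, t i ⊆ s i) :
    univ.pi s ∩ S.pi t = univ.pi fun i => if i ∈ S then t i else s i := by
  rw [← univ_pi_ite S t, ← pi_inter_distrib]
  refine pi_congr rfl fun i _ => ?_
  split_ifs with hi
  · exact inter_eq_right.2 (hts i hi)
  · exact inter_univ _

section Symmetric

variable {ι α E : Type*} [Fintype ι] [MeasureSpace α] [SigmaFinite (volume : Measure α)]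
  [NormedAddCommGroup E] [NormedSpace ℝ E] {f : (ι → α) → E}

theorem setIntegral_univ_pi_comp_perm (hf : ∀ (σ : Equiv.Perm ι) (z : ι → α), f (z ∘ σ) = f z)
    (σ : Equiv.Perm ι) (s : ι → Set α) :
    ∫ z in Set.univ.pi (s ∘ σ), f z = ∫ z in Set.univ.pi s, f z := by
  have hf_piCongrLeft : ∀ z, f (Equiv.piCongrLeft (fun _ => α) σ z) = f z := fun z => by
    rw [← hf σ]
    exact congrArg f ((Equiv.piCongrLeft (fun _ => α) σ).symm_apply_apply z)
  have := (volume_measurePreserving_piCongrLeft (fun _ : ι => α) σ).setIntegral_preimage_emb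
    (MeasurableEquiv.piCongrLeft _ σ).measurableEmbedding f (Set.univ.pi s)
  rw [MeasurableEquiv.coe_piCongrLeft, Equiv.piCongrLeft_preimage_univ_pi] at this
  simp only [hf_piCongrLeft] at this
  exact this

theorem setIntegral_univ_pi_ite_eq_of_card_eq [DecidableEq ι]
    (hf : ∀ (σ : Equiv.Perm ι) (z : ι → α), f (z ∘ σ) = f z) (I Ω : Set α) {S T : Finset ι}
    (h : #S = #T) :
    ∫ z in Set.univ.pi (fun i => if i ∈ S then I else Ω), f z
      = ∫ z in Set.univ.pi (fun i => if i ∈ T then I else Ω), f z := by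
  obtain ⟨σ, hσ⟩ := Equiv.Perm.exists_map_finset_eq T S h.symm
  rw [← setIntegral_univ_pi_comp_perm hf σ]
  congr! 3 with i
  ext i
  simp [← hσ]

end Symmetric

theorem symmetric_integral_binomial_expansion_general
    (n : ℕ) (Ω I : Set ℝ) (hI : MeasurableSet I) (hIΩ : I ⊆ Ω)
    (ξ : ℂ) (f : (Fin n → ℝ) → ℂ)
    (hsym : ∀ (σ : Equiv.Perm (Fin n)) (z : Fin n → ℝ), f (z ∘ σ) = f z)
    (hint : IntegrableOn f (Set.univ.pi fun _ : Fin n => Ω)) :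
    ∫ z in Set.univ.pi (fun _ : Fin n => Ω),
        ξ ^ (Set.ncard {i : Fin n | z i ∈ I}) * f z
      = ∑ j ∈ Finset.range (n + 1), (n.choose j : ℂ) * (ξ - 1) ^ j *
          ∫ z in Set.univ.pi (fun i : Fin n => if (i : ℕ) < j then I else Ω), f z := by
  set box : ℕ → Set (Fin n → ℝ) := fun j => Set.univ.pi fun i => if (i : ℕ) < j then I else Ω
  have h_box : ∀ S : Finset (Fin n),
      ∫ z in Set.univ.pi (fun _ => Ω) ∩ (S : Set (Fin n)).pi (fun _ => I), f z
        = ∫ z in box #S, f z := fun S => by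
    have h_card : #S = #({i | (i : ℕ) < #S} : Finset (Fin n)) := by
      rw [Fin.card_filter_val_lt, min_eq_right (by simpa using card_le_univ S)]
    rw [Set.univ_pi_inter_pi_eq_univ_pi_ite _ fun _ _ => hIΩ]
    simp only [Finset.mem_coe]
    rw [setIntegral_univ_pi_ite_eq_of_card_eq hsym I Ω h_card]
    simp [box]
  rw [setIntegral_pow_ncard_mul_eq_sum hI hint]
  simp_rw [h_box]
  rw [← powerset_univ, sum_powerset_apply_card fun j => (ξ - 1) ^ j * ∫ z in box j, f z,
    card_univ, Fintype.card_fin]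
  simp_rw [nsmul_eq_mul, mul_assoc, box]

/-- Lemma 1 of the paper: for a symmetric integrable function `f` on `Ωⁿ`,
`∫_{Ωⁿ} ξ^{σ_I(z)} f(z) dz = Σ_{j=0}^{n} C(n,j) (ξ−1)^j ∫_{Iʲ×Ω^{n-j}} f(z) dz`,
where `σ_I(z)` counts the coordinates of `z` lying in `I ⊆ Ω`. -/
theorem symmetric_integral_binomial_expansion
    (n : ℕ) (Ω I : Set ℝ) (hΩ : MeasurableSet Ω) (hI : MeasurableSet I) (hIΩ : I ⊆ Ω)
    (ξ : ℂ) (f : (Fin n → ℝ) → ℂ)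
    (hsym : ∀ (σ : Equiv.Perm (Fin n)) (z : Fin n → ℝ), f (z ∘ σ) = f z)
    (hint : IntegrableOn f (Set.univ.pi fun _ : Fin n => Ω)) :
    ∫ z in Set.univ.pi (fun _ : Fin n => Ω),
        ξ ^ (Set.ncard {i : Fin n | z i ∈ I}) * f z
      = ∑ j ∈ Finset.range (n + 1), (n.choose j : ℂ) * (ξ - 1) ^ j *
          ∫ z in Set.univ.pi (fun i : Fin n => if (i : ℕ) < j then I else Ω), f z :=
  symmetric_integral_binomial_expansion_general n Ω I hI hIΩ ξ f hsym hint
end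

section
/- (Andréief's integration formula.) Let a < b be real numbers and let φ₁,…,φₙ : [a,b] → ℂ be measurable functions with ∫_a^b |φᵢ(x)|² dx < ∞ for each i. Then det( ∫_a^b φᵢ(x) · conj(φ_k(x)) dx )_{i,k=1}^{n} = (1/n!) ∫_a^b dx₁ ⋯ ∫_a^b dxₙ det(φᵢ(x_j))_{i,j=1}^{n} · conj( det(φᵢ(x_j))_{i,j=1}^{n} ). -/
/-!
Expanding both determinants over permutations writes `det(φᵢ(xⱼ)) · conj det(φᵢ(xⱼ))` as a
double sum over `σ, τ` of signed products `∏ⱼ φ_{σ j}(xⱼ) conj φ_{τ j}(xⱼ)`, each of which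
factors across the coordinates. By Fubini each term integrates to `∏ⱼ G_{σ j, τ j}` for the Gram
matrix `G`, and for fixed `τ` the sum over `σ` is `sign τ · det G`, so the double sum is
`n! · det G`.
-/

open MeasureTheory Equiv Equiv.Perm

namespace Matrix

variable {ι R : Type*} [Fintype ι] [DecidableEq ι] [CommRing R]

theorem det_mul_det_eq_sum_sum_perm (A B : Matrix ι ι R) :
    A.det * B.det =
      ∑ σ : Perm ι, ∑ τ : Perm ι, (sign σ : R) * sign τ * ∏ j, A (σ j) j * B (τ j) j := by
  simp only [det_apply', Finset.sum_mul_sum, Finset.prod_mul_distrib]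
  refine Finset.sum_congr rfl fun σ _ => Finset.sum_congr rfl fun τ _ => ?_
  ring

theorem sum_perm_sign_mul_prod_apply_perm (M : Matrix ι ι R) (τ : Perm ι) :
    ∑ σ : Perm ι, (sign σ : R) * ∏ j, M (σ j) (τ j) = sign τ * M.det := by
  rw [← det_permute', det_apply']
  rfl

theorem sum_sum_perm_sign_mul_prod (M : Matrix ι ι R) :
    ∑ σ : Perm ι, ∑ τ : Perm ι, (sign σ : R) * sign τ * ∏ j, M (σ j) (τ j) =
      ((Fintype.card ι).factorial : R) * M.det := by
  have sign_mul_self (τ : Perm ι) : (sign τ : R) * sign τ = 1 := by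
    rw [← Int.cast_mul, ← Units.val_mul, Int.units_mul_self, Units.val_one, Int.cast_one]
  calc _ = ∑ τ : Perm ι, (sign τ : R) * (sign τ * M.det) := by
        rw [Finset.sum_comm]
        refine Finset.sum_congr rfl fun τ _ => ?_
        rw [← sum_perm_sign_mul_prod_apply_perm, Finset.mul_sum]
        exact Finset.sum_congr rfl fun σ _ => by ring
    _ = _ := by
      simp_rw [← mul_assoc, sign_mul_self, one_mul, Finset.sum_const, Finset.card_univ,
        Fintype.card_perm, nsmul_eq_mul]

end Matrix

open Matrix

theorem MeasureTheory.integral_det_mul_det {ι α 𝕜 : Type*} [Fintype ι] [DecidableEq ι]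
    [RCLike 𝕜] [MeasurableSpace α] (μ : Measure α) [SigmaFinite μ] (f g : ι → α → 𝕜)
    (hfg : ∀ i k, Integrable (fun x => f i x * g k x) μ) :
    ∫ x : ι → α, (of fun i j => f i (x j)).det * (of fun i j => g i (x j)).det
        ∂(Measure.pi fun _ => μ) =
      ((Fintype.card ι).factorial : 𝕜) * (of fun i k => ∫ x, f i x * g k x ∂μ).det := by
  have term_integrable (σ τ : Perm ι) : Integrable
      (fun x : ι → α => ∏ j, f (σ j) (x j) * g (τ j) (x j)) (Measure.pi fun _ => μ) :=
    Integrable.fintype_prod fun j => hfg (σ j) (τ j)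
  simp_rw [det_mul_det_eq_sum_sum_perm, of_apply]
  rw [integral_finsetSum _ fun σ _ =>
    integrable_finsetSum _ fun τ _ => (term_integrable σ τ).const_mul _]
  simp_rw [← sum_sum_perm_sign_mul_prod]
  refine Finset.sum_congr rfl fun σ _ => ?_
  rw [integral_finsetSum _ fun τ _ => (term_integrable σ τ).const_mul _]
  refine Finset.sum_congr rfl fun τ _ => ?_
  rw [integral_const_mul, integral_fintype_prod_eq_prod (fun j x => f (σ j) x * g (τ j) x)]
  rfl

theorem andreief_integration_formula_general
    (n : ℕ) (a b : ℝ) (φ : Fin n → ℝ → ℂ)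
    (hmeas : ∀ i, Measurable (φ i))
    (hL2 : ∀ i, IntegrableOn (fun x => ‖φ i x‖ ^ 2) (Set.Icc a b)) :
    Matrix.det (Matrix.of fun i k : Fin n =>
        ∫ x in Set.Icc a b, φ i x * (starRingEnd ℂ) (φ k x)) =
      (n.factorial : ℂ)⁻¹ *
        ∫ x in Set.univ.pi (fun _ : Fin n => Set.Icc a b),
          Matrix.det (Matrix.of fun i j : Fin n => φ i (x j)) *
            (starRingEnd ℂ) (Matrix.det (Matrix.of fun i j : Fin n => φ i (x j))) := by
  have hmemLp (i : Fin n) : MemLp (φ i) 2 (volume.restrict (Set.Icc a b)) :=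
    (memLp_two_iff_integrable_sq_norm (hmeas i).aestronglyMeasurable).2 (hL2 i)
  have hrestrict : volume.restrict (Set.univ.pi fun _ : Fin n => Set.Icc a b) =
      Measure.pi fun _ => volume.restrict (Set.Icc a b) := by
    rw [volume_pi, Measure.restrict_pi_pi]
  have conj_det (x : Fin n → ℝ) : (starRingEnd ℂ) (of fun i j => φ i (x j)).det =
      (of fun i j => (starRingEnd ℂ) (φ i (x j))).det := by
    rw [RingHom.map_det]
    rfl
  simp_rw [conj_det]
  rw [hrestrict, integral_det_mul_det _ φ (fun k x => (starRingEnd ℂ) (φ k x))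
      fun i k => (hmemLp i).integrable_mul (hmemLp k).star,
    Fintype.card_fin, ← mul_assoc, inv_mul_cancel₀ (by exact_mod_cast n.factorial_ne_zero),
    one_mul]

/-- Andréief's integration formula (Theorem 2 of the paper): for square-integrable
measurable functions `φ₁,…,φₙ` on `[a,b]`,
`det(∫_a^b φᵢ conj(φₖ))ᵢₖ = (1/n!) ∫_{[a,b]ⁿ} |det(φᵢ(xⱼ))|² dx₁⋯dxₙ`. -/
theorem andreief_integration_formula
    (n : ℕ) (a b : ℝ) (hab : a < b) (φ : Fin n → ℝ → ℂ)
    (hmeas : ∀ i, Measurable (φ i))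
    (hL2 : ∀ i, IntegrableOn (fun x => ‖φ i x‖ ^ 2) (Set.Icc a b)) :
    Matrix.det (Matrix.of fun i k : Fin n =>
        ∫ x in Set.Icc a b, φ i x * (starRingEnd ℂ) (φ k x)) =
      (n.factorial : ℂ)⁻¹ *
        ∫ x in Set.univ.pi (fun _ : Fin n => Set.Icc a b),
          Matrix.det (Matrix.of fun i j : Fin n => φ i (x j)) *
            (starRingEnd ℂ) (Matrix.det (Matrix.of fun i j : Fin n => φ i (x j))) :=
  andreief_integration_formula_general n a b φ hmeas hL2
end

section
/- Let ε : ℝ → ℝ be the sign function, ε(x) = x/|x| for x ≠ 0 and ε(0) = 0, and let κ ∈ ℝ. Fix x, y ∈ ℝ with x ≠ y, and let z₁,…,z_{N−1} ∈ ℝ with z_j ∉ {x, y} for all j. Then ∏_{j=1}^{N−1} ( exp( i(πκ/2)(ε(z_j − x) − ε(z_j − y)) ) · ε(x − z_j) · ε(y − z_j) ) = ( −exp( iπκ · ε(y − x) ) )^{σ}, where σ is the number of indices j such that z_j lies strictly between x and y (i.e. z_j ∈ (min(x,y), max(x,y))). -/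
open Classical in
lemma anyonic_factor_eq (κ x y zj : ℝ) (hxy : x ≠ y) (h1 : zj ≠ x) (h2 : zj ≠ y) :
    Complex.exp (Complex.I * (Real.pi * κ / 2) *
        ((Real.sign (zj - x) : ℂ) - (Real.sign (zj - y) : ℂ))) *
      (Real.sign (x - zj) : ℂ) * (Real.sign (y - zj) : ℂ) =
    if zj ∈ Set.Ioo (min x y) (max x y) then
      -Complex.exp (Complex.I * Real.pi * κ * (Real.sign (y - x) : ℂ)) else 1 := by
  rcases hxy.lt_or_gt with h | h
  · rw [min_eq_left h.le, max_eq_right h.le]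
    rw [Real.sign_of_pos (by linarith : (0:ℝ) < y - x)]
    rcases lt_or_gt_of_ne h1 with hx | hx
    · -- zj < x < y
      rw [if_neg (by simp [Set.mem_Ioo]; intro; linarith)]
      rw [Real.sign_of_neg (by linarith : zj - x < 0),
        Real.sign_of_neg (by linarith : zj - y < 0),
        Real.sign_of_pos (by linarith : (0:ℝ) < x - zj),
        Real.sign_of_pos (by linarith : (0:ℝ) < y - zj)]
      norm_num
    · rcases lt_or_gt_of_ne h2 with hy | hy
      · -- x < zj < y
        rw [if_pos ⟨hx, hy⟩]
        rw [Real.sign_of_pos (by linarith : (0:ℝ) < zj - x),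
          Real.sign_of_neg (by linarith : zj - y < 0),
          Real.sign_of_neg (by linarith : x - zj < 0),
          Real.sign_of_pos (by linarith : (0:ℝ) < y - zj)]
        have harg : Complex.I * ((Real.pi : ℂ) * (κ:ℂ) / 2) * (((1:ℝ):ℂ) - ((-1:ℝ):ℂ))
            = Complex.I * (Real.pi : ℂ) * (κ:ℂ) * ((1:ℝ):ℂ) := by push_cast; ring
        rw [harg]; push_cast; ring
      · -- x < y < zj
        rw [if_neg (by simp [Set.mem_Ioo]; intro; linarith)]
        rw [Real.sign_of_pos (by linarith : (0:ℝ) < zj - x),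
          Real.sign_of_pos (by linarith : (0:ℝ) < zj - y),
          Real.sign_of_neg (by linarith : x - zj < 0),
          Real.sign_of_neg (by linarith : y - zj < 0)]
        norm_num
  · rw [min_eq_right h.le, max_eq_left h.le]
    rw [Real.sign_of_neg (by linarith : y - x < 0)]
    rcases lt_or_gt_of_ne h2 with hy | hy
    · -- zj < y < x
      rw [if_neg (by simp [Set.mem_Ioo]; intro; linarith)]
      rw [Real.sign_of_neg (by linarith : zj - x < 0),
        Real.sign_of_neg (by linarith : zj - y < 0),
        Real.sign_of_pos (by linarith : (0:ℝ) < x - zj),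
        Real.sign_of_pos (by linarith : (0:ℝ) < y - zj)]
      norm_num
    · rcases lt_or_gt_of_ne h1 with hx | hx
      · -- y < zj < x
        rw [if_pos ⟨hy, hx⟩]
        rw [Real.sign_of_neg (by linarith : zj - x < 0),
          Real.sign_of_pos (by linarith : (0:ℝ) < zj - y),
          Real.sign_of_pos (by linarith : (0:ℝ) < x - zj),
          Real.sign_of_neg (by linarith : y - zj < 0)]
        have harg : Complex.I * ((Real.pi : ℂ) * (κ:ℂ) / 2) * ((((-1):ℝ):ℂ) - ((1:ℝ):ℂ))
            = Complex.I * (Real.pi : ℂ) * (κ:ℂ) * (((-1):ℝ):ℂ) := by push_cast; ring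
        rw [harg]; push_cast; ring
      · -- y < x < zj
        rw [if_neg (by simp [Set.mem_Ioo]; intro; linarith)]
        rw [Real.sign_of_pos (by linarith : (0:ℝ) < zj - x),
          Real.sign_of_pos (by linarith : (0:ℝ) < zj - y),
          Real.sign_of_neg (by linarith : x - zj < 0),
          Real.sign_of_neg (by linarith : y - zj < 0)]
        norm_num

/-- The phase-counting identity used in the derivation of the anyonic Lenard formula:
for `x ≠ y` and points `z₁,…,z_{N−1}` distinct from `x` and `y`,
`∏ⱼ exp(i(πκ/2)(ε(zⱼ−x) − ε(zⱼ−y))) ε(x−zⱼ) ε(y−zⱼ) = (−exp(iπκ ε(y−x)))^σ`,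
where `σ` is the number of `zⱼ` strictly between `x` and `y`, and `ε` is the
sign function. -/
theorem anyonic_phase_product_eq_pow
    (κ : ℝ) (x y : ℝ) (hxy : x ≠ y) (m : ℕ) (z : Fin m → ℝ)
    (hz : ∀ j, z j ≠ x ∧ z j ≠ y) :
    ∏ j : Fin m,
        (Complex.exp (Complex.I * (Real.pi * κ / 2) *
            ((Real.sign (z j - x) : ℂ) - (Real.sign (z j - y) : ℂ))) *
          (Real.sign (x - z j) : ℂ) * (Real.sign (y - z j) : ℂ)) =
      (-Complex.exp (Complex.I * Real.pi * κ * (Real.sign (y - x) : ℂ))) ^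
        (Set.ncard {j : Fin m | z j ∈ Set.Ioo (min x y) (max x y)}) := by
  classical
  have hcard : Set.ncard {j : Fin m | z j ∈ Set.Ioo (min x y) (max x y)} =
      (Finset.univ.filter fun j : Fin m => z j ∈ Set.Ioo (min x y) (max x y)).card := by
    rw [Set.ncard_eq_toFinset_card']
    congr 1
    ext j
    simp
  rw [hcard]
  rw [Finset.prod_congr rfl (fun j _ => anyonic_factor_eq κ x y (z j) hxy (hz j).1 (hz j).2)]
  rw [Finset.prod_ite, Finset.prod_const, Finset.prod_const_one, mul_one]
end

section
/- (von Koch expansion of the determinant.) Let S be an M×M complex matrix and let γ ∈ ℂ. Then det(I_M − γS) = 1 + Σ_{n=1}^{M} ((−γ)^n / n!) Σ_{k₁=1}^{M} ⋯ Σ_{kₙ=1}^{M} det( S_{k_p k_q} )_{p,q=1}^{n}, where the inner sum runs over all n-tuples (k₁,…,kₙ) of indices from {1,…,M} and (S_{k_p k_q})_{p,q=1}^{n} is the n×n matrix with entries taken from S at the indicated positions. -/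
/-!
`det (1 + r • S)` is a polynomial in `r` whose `n`-th coefficient is the sum of the `n × n`
principal minors of `S`. On the tuple side, `det (S_{k_p k_q})` vanishes unless `k` is injective,
and each `n`-element set of indices is the image of exactly `n!` injective tuples, all of which
give its principal minor; so the inner tuple sum is `n!` times the sum of principal minors.
-/

open Finset Matrix Polynomial
open scoped Nat

variable {R ι : Type*} [CommRing R]

theorem Finset.filter_image_eq_map_equiv [Fintype ι] [DecidableEq ι] {α : Type*} [Fintype α]
    [DecidableEq α] {s : Finset ι} (hs : #s = Fintype.card α) :
    univ.filter (fun k : α → ι => univ.image k = s) =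
      (univ : Finset (α ≃ s)).map
        ⟨fun e : α ≃ s => (Subtype.val ∘ e : α → ι),
          by intro e e' h; ext a; exact congrFun h a⟩ := by
  ext k
  simp only [mem_filter, mem_univ, true_and, mem_map]
  constructor
  · rintro rfl
    let f : α → univ.image k := fun a => ⟨k a, mem_image_of_mem k (mem_univ a)⟩
    have hf : f.Bijective := by
      refine (Fintype.bijective_iff_surjective_and_card f).2 ⟨?_, by rw [Fintype.card_coe, hs]⟩
      rintro ⟨x, hx⟩
      obtain ⟨a, -, rfl⟩ := mem_image.1 hx
      exact ⟨a, rfl⟩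
    exact ⟨Equiv.ofBijective f hf, rfl⟩
  · rintro ⟨e, rfl⟩
    ext x
    simp only [mem_image, mem_univ, true_and]
    exact ⟨fun ⟨a, ha⟩ => ha ▸ (e a).2,
      fun hx => ⟨e.symm ⟨x, hx⟩, congrArg Subtype.val (e.apply_symm_apply _)⟩⟩

namespace Matrix

theorem det_submatrix_eq_zero_of_not_injective {α : Type*} [Fintype α] [DecidableEq α]
    (S : Matrix ι ι R) {k : α → ι} (hk : ¬ k.Injective) : det (S.submatrix k k) = 0 := by
  obtain ⟨p, q, hpq, hne⟩ := Function.not_injective_iff.1 hk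
  exact det_zero_of_row_eq hne (by ext; simp [hpq])

variable [Fintype ι] [DecidableEq ι]

theorem det_one_add_smul_eq_sum_minors (S : Matrix ι ι R) (r : R) :
    det (1 + r • S) = ∑ n ∈ range (Fintype.card ι + 1),
      r ^ n *
        ∑ s ∈ powersetCard n univ, det (S.submatrix (Subtype.val : s → ι) Subtype.val) := by
  have heval : (det (1 + (X : R[X]) • S.map C)).eval r = det (1 + r • S) := by
    rw [← coe_evalRingHom, RingHom.map_det, map_add, map_one]
    congr 2
    ext i j
    simp only [RingHom.mapMatrix_apply, map_apply, smul_apply, coe_evalRingHom, smul_eq_mul,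
      eval_mul, eval_X, eval_C]
  have hdeg : (det (1 + (X : R[X]) • S.map C)).natDegree < Fintype.card ι + 1 := by
    refine Nat.lt_succ_of_le (natDegree_le_iff_coeff_eq_zero.2 fun N hN => ?_)
    rw [coeff_det_one_add_X_smul_eq_sum_minors, powersetCard_eq_empty.2 (by simpa), sum_empty]
  rw [← heval, eval_eq_sum_range' hdeg]
  simp_rw [coeff_det_one_add_X_smul_eq_sum_minors, mul_comm]

theorem sum_det_submatrix_of_image_eq {α : Type*} [Fintype α] [DecidableEq α]
    (S : Matrix ι ι R) {s : Finset ι} (hs : #s = Fintype.card α) :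
    ∑ k ∈ univ.filter (fun k : α → ι => univ.image k = s), det (S.submatrix k k) =
      (Fintype.card α)! * det (S.submatrix (Subtype.val : s → ι) Subtype.val) := by
  rw [filter_image_eq_map_equiv hs, sum_map]
  calc ∑ e : α ≃ s, det (S.submatrix (Subtype.val ∘ e) (Subtype.val ∘ e))
      = ∑ _e : α ≃ s, det (S.submatrix (Subtype.val : s → ι) Subtype.val) :=
        sum_congr rfl fun e _ => by rw [← submatrix_submatrix, det_submatrix_equiv_self]
    _ = _ := by
      rw [sum_const, card_univ, nsmul_eq_mul,
        Fintype.card_equiv (Fintype.equivOfCardEq (by simpa using hs.symm))]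

theorem sum_det_submatrix_fin_eq_factorial_mul_sum_minors (S : Matrix ι ι R) (n : ℕ) :
    ∑ k : Fin n → ι, det (S.submatrix k k) =
      n ! *
        ∑ s ∈ powersetCard n univ, det (S.submatrix (Subtype.val : s → ι) Subtype.val) := by
  rw [← sum_fiberwise univ (fun k : Fin n → ι => univ.image k), powersetCard_eq_filter,
    mul_sum, sum_filter]
  refine sum_congr rfl fun s _ => ?_
  split_ifs with hs
  · simpa using sum_det_submatrix_of_image_eq S (α := Fin n) (by simpa using hs)
  · refine sum_eq_zero fun k hk => det_submatrix_eq_zero_of_not_injective S fun hinj => hs ?_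
    rw [← (mem_filter.1 hk).2, card_image_of_injective _ hinj, card_univ, Fintype.card_fin]

end Matrix

theorem von_koch_determinant_expansion_general
    (M : ℕ) (S : Matrix (Fin M) (Fin M) ℂ) (γ : ℂ) :
    Matrix.det (1 - γ • S) =
      1 + ∑ n ∈ Finset.Icc 1 M, ((-γ) ^ n / (n.factorial : ℂ)) *
            ∑ k : Fin n → Fin M,
              Matrix.det (Matrix.of fun p q : Fin n => S (k p) (k q)) := by
  rw [sub_eq_add_neg, ← neg_smul, det_one_add_smul_eq_sum_minors, Fintype.card_fin, range_eq_Ico,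
    sum_eq_sum_Ico_succ_bot (by omega), zero_add, Ico_add_one_right_eq_Icc]
  congr 1
  · simp
  · refine sum_congr rfl fun n _ => ?_
    have hn : (n ! : ℂ) ≠ 0 := Nat.cast_ne_zero.2 n.factorial_ne_zero
    calc (-γ) ^ n * _ = (-γ) ^ n / n ! * (n ! * _) := by field_simp
      _ = _ := congrArg _ (sum_det_submatrix_fin_eq_factorial_mul_sum_minors S n).symm

/-- von Koch expansion of the determinant: for an `M×M` complex matrix `S` and `γ ∈ ℂ`,
`det(I_M − γS) = 1 + Σ_{n=1}^{M} ((−γ)ⁿ/n!) Σ_{k₁,…,kₙ=1}^{M} det(S_{k_p k_q})_{p,q=1}^{n}`. -/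
theorem von_koch_determinant_expansion
    (M : ℕ) (hM : 0 < M) (S : Matrix (Fin M) (Fin M) ℂ) (γ : ℂ) :
    Matrix.det (1 - γ • S) =
      1 + ∑ n ∈ Finset.Icc 1 M, ((-γ) ^ n / (n.factorial : ℂ)) *
            ∑ k : Fin n → Fin M,
              Matrix.det (Matrix.of fun p q : Fin n => S (k p) (k q)) :=
  von_koch_determinant_expansion_general M S γ
end

section
/- Let x < y be real numbers, M a positive integer, γ ∈ ℂ, and let φ₁,…,φ_M, ψ₁,…,ψ_M : [x,y] → ℂ be measurable bounded functions. Define the kernel K(λ,μ) = Σ_{i=1}^{M} φᵢ(λ)·ψᵢ(μ) and the M×M matrix S with entries S_{ij} = ∫_x^y φᵢ(λ)·ψⱼ(λ) dλ. Then the Fredholm determinant series of K truncates and equals a finite determinant: 1 + Σ_{n=1}^{M} ((−γ)^n / n!) ∫_x^y dξ₁ ⋯ ∫_x^y dξₙ det( K(ξ_p, ξ_q) )_{p,q=1}^{n} = det( I_M − γS ), and moreover for every n > M the multiple integral ∫_{[x,y]ⁿ} det( K(ξ_p, ξ_q) )_{p,q=1}^{n} dξ₁⋯dξₙ vanishes.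 -/
/-!
Expanding `det (K (ξ p) (ξ q))` multilinearly in its rows gives a sum over maps
`f : Fin n → Fin M` of determinants whose `q`-th column depends on `ξ q` alone, so by Fubini
the `n`-fold integral is `∑ f, det (S.submatrix f f)`. Non-injective `f` contribute nothing and
every `n`-element subset of `Fin M` is the image of `n!` injective maps, so the integral is `n!`
times the sum of the `n × n` principal minors of `S`, which vanishes for `n > M`. Summing
against `(-γ)^n / n!` reproduces the expansion of `det (1 - γ S)` in principal minors.
-/

open Finset Polynomial MeasureTheory

namespace Finset

variable {ι m : Type*} [DecidableEq ι] [Fintype m] {s : Finset ι}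

noncomputable def equivOfImageEq (hs : #s = Fintype.card m) {f : m → ι} (hf : univ.image f = s) :
    m ≃ s :=
  Equiv.ofBijective (fun p => ⟨f p, hf ▸ mem_image_of_mem f (mem_univ p)⟩) <| by
    refine (Fintype.bijective_iff_surjective_and_card _).2 ⟨fun a => ?_, by simp [hs]⟩
    obtain ⟨p, -, hp⟩ := mem_image.1 (hf ▸ a.2 : (a : ι) ∈ univ.image f)
    exact ⟨p, Subtype.ext hp⟩

noncomputable def imageEqEquiv (hs : #s = Fintype.card m) :
    {f : m → ι // univ.image f = s} ≃ (m ≃ s) where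
  toFun f := equivOfImageEq hs f.2
  invFun e := ⟨fun p => e p, by
    ext a
    simpa using ⟨fun ⟨p, hp⟩ => hp ▸ (e p).2, fun ha => ⟨e.symm ⟨a, ha⟩, by simp⟩⟩⟩
  left_inv _ := rfl
  right_inv _ := Equiv.ext fun _ => rfl

theorem card_filter_image_eq [Fintype ι] [DecidableEq m] (hs : #s = Fintype.card m) :
    #{f : m → ι | univ.image f = s} = (Fintype.card m).factorial := by
  rw [← Fintype.card_subtype, Fintype.card_congr (imageEqEquiv hs),
    Fintype.card_equiv (Fintype.equivOfCardEq (by simp [hs]))]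

end Finset

namespace Matrix

section PrincipalMinors

variable {ι R : Type*} [CommRing R]

theorem det_submatrix_self_eq_zero_of_not_injective {m : Type*} [Fintype m] [DecidableEq m]
    (S : Matrix ι ι R) {f : m → ι} (hf : ¬ Function.Injective f) : (S.submatrix f f).det = 0 := by
  obtain ⟨p, q, hpq, hne⟩ := Function.not_injective_iff.1 hf
  exact det_zero_of_row_eq hne (by ext; simp [hpq])

variable [DecidableEq ι]

theorem det_submatrix_eq_of_image_eq {m : Type*} [Fintype m] [DecidableEq m] {s : Finset ι}
    (S : Matrix ι ι R) (hs : #s = Fintype.card m) {f : m → ι} (hf : univ.image f = s) :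
    (S.submatrix f f).det = (S.submatrix (Subtype.val : s → ι) Subtype.val).det :=
  det_submatrix_equiv_self (equivOfImageEq hs hf) (S.submatrix Subtype.val Subtype.val)

variable [Fintype ι]

def principalMinorSum (S : Matrix ι ι R) (k : ℕ) : R :=
  ∑ s ∈ univ.powersetCard k, (S.submatrix (Subtype.val : s → ι) Subtype.val).det

@[simp]
theorem principalMinorSum_zero (S : Matrix ι ι R) : S.principalMinorSum 0 = 1 := by
  simp [principalMinorSum]

theorem principalMinorSum_eq_zero_of_card_lt (S : Matrix ι ι R) {k : ℕ}
    (hk : Fintype.card ι < k) : S.principalMinorSum k = 0 := by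
  rw [principalMinorSum, powersetCard_eq_empty.2 (by rwa [card_univ]), sum_empty]

theorem det_one_add_smul_eq_sum_principalMinorSum (c : R) (S : Matrix ι ι R) :
    det (1 + c • S) = ∑ k ∈ range (Fintype.card ι + 1), c ^ k * S.principalMinorSum k := by
  have hcoeff : ∀ k, (det (1 + (X : R[X]) • S.map C)).coeff k = S.principalMinorSum k :=
    coeff_det_one_add_X_smul_eq_sum_minors S
  have hdeg : (det (1 + (X : R[X]) • S.map C)).natDegree < Fintype.card ι + 1 :=
    Nat.lt_succ_of_le <| natDegree_le_iff_coeff_eq_zero.2 fun k hk => by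
      rw [hcoeff, principalMinorSum_eq_zero_of_card_lt S (mod_cast hk)]
  have heval : det (1 + c • S) = (det (1 + (X : R[X]) • S.map C)).eval c := by
    simp [eval_det, ← smul_eq_mul_diagonal]
  simp_rw [heval, eval_eq_sum_range' hdeg, hcoeff, mul_comm]

theorem sum_det_submatrix_self_eq_factorial_mul (S : Matrix ι ι R) (n : ℕ) :
    ∑ f : Fin n → ι, (S.submatrix f f).det = n.factorial * S.principalMinorSum n := by
  have hcard : ∀ s ∈ (univ : Finset ι).powersetCard n, #s = Fintype.card (Fin n) := fun s hs => by
    rw [(mem_powersetCard.1 hs).2, Fintype.card_fin]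
  calc ∑ f : Fin n → ι, (S.submatrix f f).det
      = ∑ f : Fin n → ι with univ.image f ∈ univ.powersetCard n, (S.submatrix f f).det := by
        refine (sum_filter_of_ne fun f _ hf => ?_).symm
        have hinj : Function.Injective f := by
          by_contra h
          exact hf (det_submatrix_self_eq_zero_of_not_injective S h)
        simp [card_image_of_injective _ hinj]
    _ = ∑ s ∈ univ.powersetCard n, ∑ f : Fin n → ι with univ.image f = s,
          (S.submatrix (Subtype.val : s → ι) Subtype.val).det := by
        rw [← sum_fiberwise_eq_sum_filter]
        refine sum_congr rfl fun s hs => sum_congr rfl fun f hf => ?_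
        exact det_submatrix_eq_of_image_eq S (hcard s hs) (mem_filter.1 hf).2
    _ = n.factorial * S.principalMinorSum n := by
        rw [principalMinorSum, mul_sum]
        refine sum_congr rfl fun s hs => ?_
        rw [sum_const, card_filter_image_eq (hcard s hs), Fintype.card_fin, nsmul_eq_mul]

end PrincipalMinors

section FiniteRank

variable {m ι R : Type*} [Fintype m] [DecidableEq m] [Fintype ι] [CommRing R]

theorem det_of_sum_mul (a : m → ι → R) (b : ι → m → R) :
    det (of fun p q => ∑ i, a p i * b i q)
      = ∑ f : m → ι, det (of fun p q => a p (f p) * b (f p) q) := by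
  have hrows : (of fun p q => ∑ i, a p i * b i q) = fun p => ∑ i, fun q => a p i * b i q := by
    ext p q
    simp [Finset.sum_apply]
  rw [hrows]
  exact (detRowAlternating : (m → R) [⋀^m]→ₗ[R] R).toMultilinearMap.map_sum _

theorem det_finiteRank_eq_sum_det_of_cols {α : Type*} (φ ψ : ι → α → R) (ξ : m → α) :
    det (of fun p q => ∑ i, φ i (ξ p) * ψ i (ξ q))
      = ∑ f : m → ι, det (of fun p q => ψ (f q) (ξ q) * φ (f p) (ξ q)) := by
  have htranspose : (of fun p q => ∑ i, φ i (ξ p) * ψ i (ξ q))ᵀ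
      = of fun p q => ∑ i, ψ i (ξ p) * φ i (ξ q) := by
    ext p q
    simp [mul_comm]
  rw [← det_transpose, htranspose, det_of_sum_mul]
  refine sum_congr rfl fun f _ => ?_
  -- moving the factor of row `p` to column `p` leaves column `q` depending on `ξ q` only
  calc det (of fun p q => ψ (f p) (ξ p) * φ (f p) (ξ q))
      = (∏ p, ψ (f p) (ξ p)) * det (of fun p q => φ (f p) (ξ q)) :=
        det_mul_column (fun p => ψ (f p) (ξ p)) _
    _ = det (of fun p q => ψ (f q) (ξ q) * φ (f p) (ξ q)) :=
        (det_mul_row (fun q => ψ (f q) (ξ q)) _).symm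

end FiniteRank

section Integrals

variable {𝕜 m : Type*} [RCLike 𝕜] [Fintype m] [DecidableEq m] {α : m → Type*}
  [∀ q, MeasurableSpace (α q)] {μ : ∀ q, Measure (α q)} [∀ q, SigmaFinite (μ q)]

theorem integrable_det_of_cols {g : m → ∀ q, α q → 𝕜} (hg : ∀ p q, Integrable (g p q) (μ q)) :
    Integrable (fun ξ : ∀ q, α q => det (of fun p q => g p q (ξ q))) (Measure.pi μ) := by
  simp only [det_apply', of_apply]
  exact integrable_finsetSum _ fun σ _ =>
    (Integrable.fintype_prod_dep fun q => hg (σ q) q).const_mul _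

theorem integral_det_of_cols {g : m → ∀ q, α q → 𝕜} (hg : ∀ p q, Integrable (g p q) (μ q)) :
    ∫ ξ, det (of fun p q => g p q (ξ q)) ∂Measure.pi μ = det (of fun p q => ∫ t, g p q t ∂μ q) := by
  simp only [det_apply', of_apply]
  rw [integral_finsetSum _ fun σ _ =>
    (Integrable.fintype_prod_dep fun q => hg (σ q) q).const_mul _]
  simp_rw [integral_const_mul, integral_fintype_prod_eq_prod]

end Integrals

theorem integral_det_finiteRank {𝕜 m ι α : Type*} [RCLike 𝕜] [Fintype m] [DecidableEq m]
    [Fintype ι] [MeasurableSpace α] {μ : Measure α} [SigmaFinite μ] (φ ψ : ι → α → 𝕜)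
    (h : ∀ i j, Integrable (fun t => φ i t * ψ j t) μ) :
    ∫ ξ, det (of fun p q : m => ∑ i, φ i (ξ p) * ψ i (ξ q)) ∂Measure.pi (fun _ => μ)
      = ∑ f : m → ι, det ((of fun i j => ∫ t, φ i t * ψ j t ∂μ).submatrix f f) := by
  have hcols : ∀ (f : m → ι) p q, Integrable (fun t => ψ (f q) t * φ (f p) t) μ := fun f p q => by
    simpa only [mul_comm] using h (f p) (f q)
  simp_rw [det_finiteRank_eq_sum_det_of_cols φ ψ]
  rw [integral_finsetSum _ fun f _ => integrable_det_of_cols (hcols f)]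
  refine sum_congr rfl fun f _ => ?_
  rw [integral_det_of_cols (hcols f)]
  congr
  ext p q
  simp [mul_comm]

end Matrix

theorem integrableOn_mul_of_bounded {α 𝕜 : Type*} [MeasurableSpace α] [RCLike 𝕜] {μ : Measure α}
    {s : Set α} (hs : MeasurableSet s) (hμs : μ s < ⊤) {f g : α → 𝕜} (hf : Measurable f)
    (hg : Measurable g) (hfb : ∃ C : ℝ, ∀ t ∈ s, ‖f t‖ ≤ C) (hgb : ∃ C : ℝ, ∀ t ∈ s, ‖g t‖ ≤ C) :
    IntegrableOn (fun t => f t * g t) s μ := by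
  obtain ⟨C, hC⟩ := hfb
  obtain ⟨D, hD⟩ := hgb
  refine IntegrableOn.of_bound hμs (hf.mul hg).aestronglyMeasurable (|C| * |D|) ?_
  filter_upwards [ae_restrict_mem hs] with t ht
  rw [norm_mul]
  exact mul_le_mul ((hC t ht).trans (le_abs_self C)) ((hD t ht).trans (le_abs_self D))
    (norm_nonneg _) (abs_nonneg C)

theorem fredholm_det_finite_rank_eq_matrix_det_general
    (x y : ℝ) (M : ℕ) (γ : ℂ)
    (φ ψ : Fin M → ℝ → ℂ)
    (hφm : ∀ i, Measurable (φ i)) (hψm : ∀ i, Measurable (ψ i))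
    (hφb : ∀ i, ∃ C : ℝ, ∀ t ∈ Set.Icc x y, ‖φ i t‖ ≤ C)
    (hψb : ∀ i, ∃ C : ℝ, ∀ t ∈ Set.Icc x y, ‖ψ i t‖ ≤ C) :
    (1 + ∑ n ∈ Finset.Icc 1 M, ((-γ) ^ n / (n.factorial : ℂ)) *
          ∫ ξ in Set.univ.pi (fun _ : Fin n => Set.Icc x y),
            Matrix.det (Matrix.of fun p q : Fin n => ∑ i : Fin M, φ i (ξ p) * ψ i (ξ q))
        = Matrix.det (1 - γ • Matrix.of (fun i j : Fin M =>
            ∫ t in Set.Icc x y, φ i t * ψ j t))) ∧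
      ∀ n : ℕ, M < n →
        (∫ ξ in Set.univ.pi (fun _ : Fin n => Set.Icc x y),
            Matrix.det (Matrix.of fun p q : Fin n => ∑ i : Fin M, φ i (ξ p) * ψ i (ξ q))) = 0 := by
  set S := Matrix.of fun i j : Fin M => ∫ t in Set.Icc x y, φ i t * ψ j t
  have hint : ∀ n : ℕ, ∫ ξ in Set.univ.pi (fun _ : Fin n => Set.Icc x y),
      Matrix.det (Matrix.of fun p q : Fin n => ∑ i : Fin M, φ i (ξ p) * ψ i (ξ q))
        = n.factorial * S.principalMinorSum n := fun n => by
    rw [volume_pi, Measure.restrict_pi_pi, Matrix.integral_det_finiteRank φ ψ fun i j =>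
      integrableOn_mul_of_bounded measurableSet_Icc measure_Icc_lt_top (hφm i) (hψm j) (hφb i)
        (hψb j), Matrix.sum_det_submatrix_self_eq_factorial_mul]
  refine ⟨?_, fun n hn => ?_⟩
  · have hterm : ∀ n : ℕ, (-γ) ^ n / n.factorial * (n.factorial * S.principalMinorSum n)
        = (-γ) ^ n * S.principalMinorSum n := fun n => by
      rw [← mul_assoc, div_mul_cancel₀ _ (Nat.cast_ne_zero.2 n.factorial_ne_zero)]
    rw [sub_eq_add_neg, ← neg_smul, Matrix.det_one_add_smul_eq_sum_principalMinorSum,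
      Fintype.card_fin, range_eq_Ico, sum_eq_sum_Ico_succ_bot M.add_one_pos,
      zero_add, Ico_add_one_right_eq_Icc]
    simp only [hint, hterm, pow_zero, Matrix.principalMinorSum_zero, one_mul]
  · rw [hint, S.principalMinorSum_eq_zero_of_card_lt (by simpa), mul_zero]

/-- For the finite-rank kernel `K(λ,μ) = Σᵢ φᵢ(λ)ψᵢ(μ)` on `[x,y]` with overlap matrix
`S_{ij} = ∫_x^y φᵢ ψⱼ`, the Fredholm determinant series truncates at order `M` and equals
`det(I_M − γS)`; moreover all multiple integrals of determinants of order `n > M` vanish. -/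
theorem fredholm_det_finite_rank_eq_matrix_det
    (x y : ℝ) (hxy : x < y) (M : ℕ) (hM : 0 < M) (γ : ℂ)
    (φ ψ : Fin M → ℝ → ℂ)
    (hφm : ∀ i, Measurable (φ i)) (hψm : ∀ i, Measurable (ψ i))
    (hφb : ∀ i, ∃ C : ℝ, ∀ t ∈ Set.Icc x y, ‖φ i t‖ ≤ C)
    (hψb : ∀ i, ∃ C : ℝ, ∀ t ∈ Set.Icc x y, ‖ψ i t‖ ≤ C) :
    (1 + ∑ n ∈ Finset.Icc 1 M, ((-γ) ^ n / (n.factorial : ℂ)) *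
          ∫ ξ in Set.univ.pi (fun _ : Fin n => Set.Icc x y),
            Matrix.det (Matrix.of fun p q : Fin n => ∑ i : Fin M, φ i (ξ p) * ψ i (ξ q))
        = Matrix.det (1 - γ • Matrix.of (fun i j : Fin M =>
            ∫ t in Set.Icc x y, φ i t * ψ j t))) ∧
      ∀ n : ℕ, M < n →
        (∫ ξ in Set.univ.pi (fun _ : Fin n => Set.Icc x y),
            Matrix.det (Matrix.of fun p q : Fin n => ∑ i : Fin M, φ i (ξ p) * ψ i (ξ q))) = 0 :=
  fredholm_det_finite_rank_eq_matrix_det_general x y M γ φ ψ hφm hψm hφb hψb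
end

section
/- (First Fredholm minor for a finite-rank kernel.) Let x < y be real numbers, M a positive integer, γ ∈ ℂ, and let φ₁,…,φ_M, ψ₁,…,ψ_M : [x,y] → ℂ be measurable bounded functions. Define K(λ,μ) = Σ_{i=1}^{M} φᵢ(λ)·ψᵢ(μ), the matrix S with S_{ij} = ∫_x^y φᵢψⱼ, and assume I_M − γSᵀ is invertible; set R(λ,μ) = Σ_{i,j=1}^{M} φᵢ(λ) ((I_M − γSᵀ)^{−1})_{ij} ψⱼ(μ). Then for all λ, μ ∈ [x,y]: K(λ,μ) + Σ_{p=1}^{M−1} ((−γ)^p / p!) ∫_x^y dν₁ ⋯ ∫_x^y dν_p det( K(u_r, v_s) )_{r,s=0}^{p} = R(λ,μ) · det(I_M − γS), where in the (p+1)×(p+1) determinant the arguments are u₀ = λ, v₀ = μ and u_r = v_r = ν_r for r = 1,…,p. -/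
/-!
Expanding `det (K(u_r, v_s))` multilinearly in the rows of the rank-`M` kernel
`K = ∑ᵢ φᵢ ⊗ ψᵢ` separates the variables, so integrating out `ν₁, …, ν_p` turns the `p`-th
term into `∑_g det C_g` over all `g : Fin (p+1) → Fin M`, where `C_g` is the principal
`g`-submatrix of `-γ S` with its first row replaced by the rank-one row `φ_{g 0}(λ) ψ_{g t}(μ)`.
Since `det (1 + A) = ∑_p (1/p!) ∑_{g : Fin p → Fin M} det A_{g g}`, and a rank-one perturbation
changes a determinant only through single-row replacements (which are all alike after
relabelling by a transposition), the whole sum is `det (1 - γ S + φ(λ) ψ(μ)ᵀ) - det (1 - γ S)`.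
The matrix determinant lemma evaluates this to `R(λ, μ) det (1 - γ S)`.
-/

open Finset MeasureTheory

theorem Finset.sum_finset_eq_empty_add_sum_singleton {ι M : Type*} [Fintype ι] [DecidableEq ι]
    [AddCommMonoid M] (f : Finset ι → M) (hf : ∀ s : Finset ι, 2 ≤ s.card → f s = 0) :
    ∑ s, f s = f ∅ + ∑ i, f {i} := by
  have hsmall (s : Finset ι) (hs : s ∉ insert ∅ (univ.map ⟨singleton, singleton_injective⟩)) :
      f s = 0 := by
    simp only [mem_insert, mem_map, mem_univ, true_and, Function.Embedding.coeFn_mk, not_or,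
      not_exists] at hs
    have h0 : s.card ≠ 0 := by simpa using hs.1
    have h1 : s.card ≠ 1 := fun h => by
      obtain ⟨i, rfl⟩ := card_eq_one.mp h
      exact hs.2 i rfl
    exact hf s (by omega)
  rw [← sum_subset (subset_univ _) fun s _ => hsmall s, sum_insert (by simp), sum_map]
  rfl

namespace Matrix

section CommRing

variable {R : Type*} [CommRing R] {n : Type*} [Fintype n]

theorem sum_det_updateRow_submatrix_eq {m : Type*} [Fintype m] [DecidableEq m]
    (A B : Matrix n n R) (i j : m) :
    ∑ g : m → n, det ((A.submatrix g g).updateRow i (B.submatrix g g i))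
      = ∑ g : m → n, det ((A.submatrix g g).updateRow j (B.submatrix g g j)) := by
  let τ := Equiv.swap i j
  rw [← (Equiv.arrowCongr τ (Equiv.refl n)).sum_comp]
  refine sum_congr rfl fun g _ => ?_
  have h : (A.submatrix (g ∘ τ) (g ∘ τ)).updateRow i (B.submatrix (g ∘ τ) (g ∘ τ) i)
      = ((A.submatrix g g).updateRow j (B.submatrix g g j)).submatrix τ τ := by
    ext r t
    by_cases hr : r = i <;> simp [updateRow_apply, τ, hr, Equiv.swap_apply_eq_iff]
  have hg : Equiv.arrowCongr τ (Equiv.refl n) g = g ∘ τ := by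
    ext r; simp [τ, Equiv.symm_swap]
  rw [hg, h, det_submatrix_equiv_self]

theorem dotProduct_mulVec_eq_sum_sum_transpose (A : Matrix n n R) (a b : n → R) :
    b ⬝ᵥ A *ᵥ a = ∑ i, ∑ j, a i * Aᵀ i j * b j := by
  rw [sum_comm]
  simp only [dotProduct, mulVec, transpose_apply, mul_sum]
  exact sum_congr rfl fun j _ => sum_congr rfl fun i _ => by ring

variable [DecidableEq n]

theorem det_add_eq_sum_det_piecewise (A B : Matrix n n R) :
    det (A + B) = ∑ s : Finset n, det (of (s.piecewise A.row B.row)) :=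
  detRowAlternating.map_add_univ A B

theorem det_one_add_eq_sum_det_submatrix (A : Matrix n n R) :
    det (1 + A) = ∑ s : Finset n, det (A.submatrix ((↑) : s → n) (↑)) := by
  rw [add_comm, det_add_eq_sum_det_piecewise]
  exact Finset.sum_congr rfl fun s _ => det_piecewise_one_eq_submatrix_det A s

theorem det_add_vecMulVec (A : Matrix n n R) (u v : n → R) :
    det (A + vecMulVec u v)
      = det A + ∑ i, det (A.updateRow i (u i • v)) := by
  have hscale (s : Finset n) : det (of (s.piecewise (vecMulVec u v).row A.row))
      = (∏ i ∈ s, u i) * det (of (s.piecewise (fun _ => v) A.row)) := by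
    rw [← univ_inter s, ← prod_ite_mem, ← det_mul_column]
    congr 1
    ext i j
    by_cases hi : i ∈ s <;> simp [hi, vecMulVec_apply]
  have hvanish (s : Finset n) (hs : 2 ≤ s.card) :
      det (of (s.piecewise (vecMulVec u v).row A.row)) = 0 := by
    obtain ⟨i, hi, j, hj, hij⟩ := one_lt_card.mp hs
    rw [hscale, det_zero_of_row_eq hij (funext fun c => ?_), mul_zero]
    simp only [of_apply, piecewise_eq_of_mem _ _ _ hi, piecewise_eq_of_mem _ _ _ hj]
  rw [add_comm, det_add_eq_sum_det_piecewise, sum_finset_eq_empty_add_sum_singleton _ hvanish]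
  congr 1
  refine sum_congr rfl fun i _ => congrArg det ?_
  ext r t
  by_cases h : r = i
  · subst h; simp [vecMulVec_apply]
  · simp [h]

theorem det_add_vecMulVec_sub_det {A : Matrix n n R} (hA : IsUnit A.det) (u v : n → R) :
    det (A + vecMulVec u v) - det A = (v ⬝ᵥ A⁻¹ *ᵥ u) * det A := by
  rw [vecMulVec_eq Unit, det_add_replicateCol_mul_replicateRow hA, det_unique (n := Unit),
    ← replicateRow_vecMul, add_apply, one_apply_eq, replicateRow_mul_replicateCol_apply,
    dotProduct_mulVec]
  ring

theorem det_smul_updateRow (c : R) (A : Matrix n n R) (i : n) (w : n → R) :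
    det ((c • A).updateRow i w) = c ^ (Fintype.card n - 1) * det (A.updateRow i w) := by
  have h : (c • A).updateRow i w
      = of fun r t => (if r = i then 1 else c) * A.updateRow i w r t := by
    ext r t
    by_cases hr : r = i <;> simp [hr, updateRow_apply]
  rw [h, det_mul_column]
  simp [Finset.prod_ite, Finset.filter_ne', Finset.card_erase_of_mem]

theorem det_of_sum_mul_s9 {ι : Type*} [Fintype ι] (a b : n → ι → R) :
    det (of fun r s => ∑ i, a r i * b s i)
      = ∑ g : n → ι, ∑ σ : Equiv.Perm n,
          Equiv.Perm.sign σ * ∏ r, (a r (g r) * b r (g (σ r))) := by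
  have hrows : (of fun r s => ∑ i, a r i * b s i) = fun r => ∑ i, a r i • fun s => b s i := by
    ext r s; simp [Finset.sum_apply]
  calc det (of fun r s => ∑ i, a r i * b s i)
      = ∑ g : n → ι, detRowAlternating fun r => a r (g r) • fun s => b s (g r) := by
        rw [hrows]; exact detRowAlternating.toMultilinearMap.map_sum _
    _ = ∑ g : n → ι, (∏ r, a r (g r)) * det (of fun r s => b s (g r)) := by
        simp_rw [AlternatingMap.map_smul_univ]; rfl
    _ = _ := by
        simp_rw [det_apply', mul_sum, prod_mul_distrib]
        refine sum_congr rfl fun g _ => sum_congr rfl fun σ _ => ?_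
        simp only [of_apply]
        ring

theorem sum_det_submatrix_of_image_eq_s9 {p : ℕ} (A : Matrix n n R) (s : Finset n)
    (hs : s.card = p) :
    ∑ g ∈ univ.filter (fun g : Fin p → n => Function.Injective g ∧ univ.image g = s),
      det (A.submatrix g g) = p.factorial * det (A.submatrix ((↑) : s → n) (↑)) := by
  let e : Fin p ≃ s := (s.equivFinOfCardEq hs).symm
  have hsum : ∑ π : Equiv.Perm (Fin p), det (A.submatrix ((↑) ∘ e ∘ π) ((↑) ∘ e ∘ π))
      = ∑ g ∈ univ.filter (fun g : Fin p → n => Function.Injective g ∧ univ.image g = s),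
          det (A.submatrix g g) := by
    refine Finset.sum_nbij (fun π => (↑) ∘ e ∘ π) (fun π _ => ?_) (fun π _ τ _ h => ?_)
      (fun g hg => ?_) (fun _ _ => rfl)
    · simp only [mem_filter, mem_univ, true_and]
      refine ⟨Subtype.val_injective.comp (e.injective.comp π.injective), ?_⟩
      ext i
      simp only [mem_image, mem_univ, true_and, Function.comp_apply]
      exact ⟨fun ⟨r, hr⟩ => hr ▸ (e (π r)).2,
        fun hi => ⟨π.symm (e.symm ⟨i, hi⟩), by simp⟩⟩
    · exact Equiv.ext fun r => e.injective (Subtype.val_injective (congrFun h r))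
    · simp only [coe_filter, mem_univ, true_and, Set.mem_ofPred_eq] at hg
      obtain ⟨hinj, himage⟩ := hg
      have hmem : ∀ r, g r ∈ s := fun r => himage ▸ mem_image_of_mem g (mem_univ r)
      have hbij : Function.Bijective fun r => (⟨g r, hmem r⟩ : s) := by
        rw [Fintype.bijective_iff_injective_and_card, Fintype.card_coe, hs, Fintype.card_fin]
        exact ⟨fun r t h => hinj (congrArg Subtype.val h), rfl⟩
      refine ⟨(Equiv.ofBijective _ hbij).trans e.symm, mem_coe.2 (mem_univ _), ?_⟩
      funext r
      simp
  rw [← hsum]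
  simp_rw [← submatrix_submatrix, det_submatrix_equiv_self]
  simp [Fintype.card_perm]

theorem sum_det_submatrix_eq_factorial_mul (A : Matrix n n R) (p : ℕ) :
    ∑ g : Fin p → n, det (A.submatrix g g)
      = p.factorial *
          ∑ s ∈ powersetCard p (univ : Finset n), det (A.submatrix ((↑) : s → n) (↑)) := by
  have hinj : ∑ g : Fin p → n, det (A.submatrix g g)
      = ∑ g ∈ univ.filter (fun g : Fin p → n => Function.Injective g), det (A.submatrix g g) := by
    refine (Finset.sum_filter_of_ne fun g _ hg => ?_).symm
    by_contra hninj
    obtain ⟨r, t, hrt, hne⟩ := Function.not_injective_iff.mp hninj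
    exact hg (det_zero_of_row_eq hne (funext fun c => by simp only [submatrix_apply, hrt]))
  have hmaps : ∀ g ∈ univ.filter (fun g : Fin p → n => Function.Injective g),
      univ.image g ∈ univ.powersetCard p := fun g hg => by
    rw [mem_filter] at hg
    simp [card_image_of_injective _ hg.2]
  rw [hinj, ← sum_fiberwise_of_maps_to hmaps, mul_sum]
  refine sum_congr rfl fun s hs => ?_
  rw [filter_filter]
  exact sum_det_submatrix_of_image_eq_s9 A s (mem_powersetCard.mp hs).2

end CommRing

section Field

variable {K : Type*} [Field K] [CharZero K] {n : Type*} [Fintype n] [DecidableEq n]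

theorem det_one_add_eq_sum_inv_factorial_mul (A : Matrix n n K) :
    det (1 + A) = ∑ p ∈ range (Fintype.card n + 1),
      (p.factorial : K)⁻¹ * ∑ g : Fin p → n, det (A.submatrix g g) := by
  have hfac (p : ℕ) : (p.factorial : K)⁻¹ * p.factorial = 1 :=
    inv_mul_cancel₀ (Nat.cast_ne_zero.mpr (Nat.factorial_ne_zero p))
  simp_rw [sum_det_submatrix_eq_factorial_mul, ← mul_assoc, hfac, one_mul]
  rw [det_one_add_eq_sum_det_submatrix, ← powerset_univ, sum_powerset, Finset.card_univ]

theorem sum_inv_factorial_mul_sum_det_updateRow_zero (Q : Matrix n n K) (a b : n → K) :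
    ∑ q ∈ range (Fintype.card n), (q.factorial : K)⁻¹ * ∑ g : Fin (q + 1) → n,
        det ((Q.submatrix g g).updateRow 0 (fun t => a (g 0) * b (g t)))
      = det (1 + (Q + vecMulVec a b)) - det (1 + Q) := by
  have hrank {q : ℕ} (g : Fin q → n) :
      det ((Q + vecMulVec a b).submatrix g g) - det (Q.submatrix g g)
        = ∑ r, det ((Q.submatrix g g).updateRow r ((vecMulVec a b).submatrix g g r)) := by
    have h : (Q + vecMulVec a b).submatrix g g = Q.submatrix g g + vecMulVec (a ∘ g) (b ∘ g) := by
      ext r t; simp [vecMulVec_apply]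
    rw [h, det_add_vecMulVec, add_sub_cancel_left]
    rfl
  rw [det_one_add_eq_sum_inv_factorial_mul, det_one_add_eq_sum_inv_factorial_mul,
    ← sum_sub_distrib, sum_range_succ']
  have hempty : ((0).factorial : K)⁻¹ * ∑ g : Fin 0 → n, det ((Q + vecMulVec a b).submatrix g g)
      - ((0).factorial : K)⁻¹ * ∑ g : Fin 0 → n, det (Q.submatrix g g) = 0 := by
    simp [det_isEmpty]
  rw [hempty, add_zero]
  refine sum_congr rfl fun q _ => ?_
  rw [← mul_sub, ← sum_sub_distrib]
  simp_rw [hrank]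
  rw [sum_comm, sum_congr rfl fun r _ => sum_det_updateRow_submatrix_eq Q (vecMulVec a b) r 0,
    sum_const, Finset.card_univ, Fintype.card_fin, nsmul_eq_mul, ← mul_assoc, Nat.factorial_succ]
  have hrow (g : Fin (q + 1) → n) :
      (vecMulVec a b).submatrix g g 0 = fun t => a (g 0) * b (g t) := rfl
  have hq : (q.factorial : K) ≠ 0 := Nat.cast_ne_zero.mpr (Nat.factorial_ne_zero q)
  simp_rw [hrow]
  field_simp
  push_cast
  ring

end Field

end Matrix

section Integral

open Matrix

variable {𝕜 : Type*} [RCLike 𝕜] {α : Type*} [MeasurableSpace α] {μ : Measure α}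

theorem MeasureTheory.IntegrableOn.mul_of_bounded {s : Set α} (hs : MeasurableSet s)
    (hμs : μ s < ⊤) {f g : α → 𝕜}
    (hf : AEStronglyMeasurable f (μ.restrict s)) (hg : AEStronglyMeasurable g (μ.restrict s))
    (hfb : ∃ C : ℝ, ∀ t ∈ s, ‖f t‖ ≤ C) (hgb : ∃ C : ℝ, ∀ t ∈ s, ‖g t‖ ≤ C) :
    IntegrableOn (fun t => f t * g t) s μ := by
  obtain ⟨Cf, hCf⟩ := hfb
  obtain ⟨Cg, hCg⟩ := hgb
  refine IntegrableOn.of_bound hμs (hf.mul hg) (Cf * Cg)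
    (ae_restrict_of_forall_mem hs fun t ht => ?_)
  rw [norm_mul]
  exact mul_le_mul (hCf t ht) (hCg t ht) (norm_nonneg _) ((norm_nonneg _).trans (hCf t ht))

/-- The series of the first Fredholm minor `D₁(u, v | γ)` of `K` on `(α, μ)`, summed over
`p < N`. -/
noncomputable def firstFredholmMinor (μ : Measure α) (K : α → α → 𝕜) (γ : 𝕜) (N : ℕ)
    (u v : α) : 𝕜 :=
  ∑ p ∈ range N, (-γ) ^ p / (p.factorial : 𝕜) *
    ∫ ν, det (of fun r s : Fin (p + 1) =>
      K ((Fin.cons u ν : Fin (p + 1) → α) r) ((Fin.cons v ν : Fin (p + 1) → α) s))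
      ∂(Measure.pi fun _ : Fin p => μ)

theorem integral_det_cons_fin_zero (K : α → α → 𝕜) (u v : α) :
    ∫ ν, det (of fun r s : Fin (0 + 1) =>
      K ((Fin.cons u ν : Fin (0 + 1) → α) r) ((Fin.cons v ν : Fin (0 + 1) → α) s))
      ∂(Measure.pi fun _ : Fin 0 => μ) = K u v := by
  rw [Measure.pi_of_empty, integral_dirac]
  simp [det_unique]

variable [SigmaFinite μ] {ι : Type*} [Fintype ι]

theorem integral_det_sum_mul_cons (φ ψ : ι → α → 𝕜)
    (hφψ : ∀ i j, Integrable (fun t => φ i t * ψ j t) μ) (p : ℕ) (u₀ v₀ : α) :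
    ∫ ν, det (of fun r s : Fin (p + 1) =>
        ∑ i, φ i ((Fin.cons u₀ ν : Fin (p + 1) → α) r) * ψ i ((Fin.cons v₀ ν : Fin (p + 1) → α) s))
        ∂(Measure.pi fun _ : Fin p => μ)
      = ∑ g : Fin (p + 1) → ι,
          det (((of fun i j => ∫ t, φ i t * ψ j t ∂μ).submatrix g g).updateRow 0
            fun t => φ (g 0) u₀ * ψ (g t) v₀) := by
  set S : Matrix ι ι 𝕜 := of fun i j => ∫ t, φ i t * ψ j t ∂μ
  have hpt (ν : Fin p → α) : det (of fun r s : Fin (p + 1) =>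
        ∑ i, φ i ((Fin.cons u₀ ν : Fin (p + 1) → α) r) * ψ i ((Fin.cons v₀ ν : Fin (p + 1) → α) s))
      = ∑ g : Fin (p + 1) → ι, ∑ σ : Equiv.Perm (Fin (p + 1)),
          (Equiv.Perm.sign σ * (φ (g 0) u₀ * ψ (g (σ 0)) v₀)) *
            ∏ j : Fin p, (φ (g j.succ) (ν j) * ψ (g (σ j.succ)) (ν j)) := by
    rw [det_of_sum_mul_s9]
    simp only [Fin.prod_univ_succ, Fin.cons_zero, Fin.cons_succ, mul_assoc]
  have hdet (g : Fin (p + 1) → ι) : det ((S.submatrix g g).updateRow 0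
        fun t => φ (g 0) u₀ * ψ (g t) v₀)
      = ∑ σ : Equiv.Perm (Fin (p + 1)), (Equiv.Perm.sign σ * (φ (g 0) u₀ * ψ (g (σ 0)) v₀)) *
          ∏ j : Fin p, S (g j.succ) (g (σ j.succ)) := by
    rw [← det_transpose, det_apply']
    simp [Fin.prod_univ_succ, Fin.succ_ne_zero, mul_assoc]
  simp_rw [hpt, hdet]
  rw [integral_finsetSum _ fun g _ => integrable_finsetSum _ fun σ _ =>
    (Integrable.fintype_prod fun j => hφψ _ _).const_mul _]
  refine sum_congr rfl fun g _ => ?_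
  rw [integral_finsetSum _ fun σ _ => (Integrable.fintype_prod fun j => hφψ _ _).const_mul _]
  refine sum_congr rfl fun σ _ => ?_
  rw [integral_const_mul]
  exact congrArg _
    (integral_fintype_prod_eq_prod fun (j : Fin p) t => φ (g j.succ) t * ψ (g (σ j.succ)) t)

variable [DecidableEq ι]

theorem firstFredholmMinor_sum_mul_eq (φ ψ : ι → α → 𝕜)
    (hφψ : ∀ i j, Integrable (fun t => φ i t * ψ j t) μ) (γ : 𝕜)
    (hunit : IsUnit (1 - γ • of fun i j => ∫ t, φ i t * ψ j t ∂μ).det) (u₀ v₀ : α) :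
    firstFredholmMinor μ (fun u v => ∑ i, φ i u * ψ i v) γ (Fintype.card ι) u₀ v₀
      = ((ψ · v₀) ⬝ᵥ (1 - γ • of fun i j => ∫ t, φ i t * ψ j t ∂μ)⁻¹ *ᵥ (φ · u₀))
        * det (1 - γ • of fun i j => ∫ t, φ i t * ψ j t ∂μ) := by
  set S : Matrix ι ι 𝕜 := of fun i j => ∫ t, φ i t * ψ j t ∂μ
  have hterm (p : ℕ) : (-γ) ^ p / (p.factorial : 𝕜) *
      ∫ ν, det (of fun r s : Fin (p + 1) =>
        ∑ i, φ i ((Fin.cons u₀ ν : Fin (p + 1) → α) r) * ψ i ((Fin.cons v₀ ν : Fin (p + 1) → α) s))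
        ∂(Measure.pi fun _ : Fin p => μ)
      = (p.factorial : 𝕜)⁻¹ * ∑ g : Fin (p + 1) → ι,
          det ((((-γ) • S).submatrix g g).updateRow 0 fun t => φ (g 0) u₀ * ψ (g t) v₀) := by
    rw [integral_det_sum_mul_cons φ ψ hφψ, mul_sum, mul_sum]
    refine sum_congr rfl fun g _ => ?_
    rw [show ((-γ) • S).submatrix g g = (-γ) • S.submatrix g g from rfl,
      det_smul_updateRow, Fintype.card_fin, add_tsub_cancel_right]
    ring
  have hshift : 1 + (-γ) • S = 1 - γ • S := by rw [neg_smul, sub_eq_add_neg]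
  rw [firstFredholmMinor, sum_congr rfl fun p _ => hterm p,
    sum_inv_factorial_mul_sum_det_updateRow_zero ((-γ) • S) (φ · u₀) (ψ · v₀), ← add_assoc, hshift,
    det_add_vecMulVec_sub_det hunit]

end Integral

theorem first_fredholm_minor_finite_rank_general
    (x y : ℝ) (M : ℕ) (hM : 0 < M) (γ : ℂ)
    (φ ψ : Fin M → ℝ → ℂ)
    (hφm : ∀ i, Measurable (φ i)) (hψm : ∀ i, Measurable (ψ i))
    (hφb : ∀ i, ∃ C : ℝ, ∀ t ∈ Set.Icc x y, ‖φ i t‖ ≤ C)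
    (hψb : ∀ i, ∃ C : ℝ, ∀ t ∈ Set.Icc x y, ‖ψ i t‖ ≤ C)
    (K : ℝ → ℝ → ℂ) (hK : K = fun l m => ∑ i : Fin M, φ i l * ψ i m)
    (S : Matrix (Fin M) (Fin M) ℂ)
    (hS : S = Matrix.of fun i j : Fin M => ∫ t in Set.Icc x y, φ i t * ψ j t)
    (hinv : IsUnit (1 - γ • S.transpose).det)
    (R : ℝ → ℝ → ℂ)
    (hR : R = fun l m => ∑ i : Fin M, ∑ j : Fin M,
        φ i l * (1 - γ • S.transpose)⁻¹ i j * ψ j m) :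
    ∀ l ∈ Set.Icc x y, ∀ m ∈ Set.Icc x y,
      K l m + ∑ p ∈ Finset.Icc 1 (M - 1), ((-γ) ^ p / (p.factorial : ℂ)) *
          ∫ ν in Set.univ.pi (fun _ : Fin p => Set.Icc x y),
            Matrix.det (Matrix.of fun r s : Fin (p + 1) =>
              K ((Fin.cons l ν : Fin (p + 1) → ℝ) r) ((Fin.cons m ν : Fin (p + 1) → ℝ) s))
        = R l m * Matrix.det (1 - γ • S) := by
  intro l _ m _
  subst hK hS hR
  set μ : Measure ℝ := volume.restrict (Set.Icc x y)
  have hφψ (i j : Fin M) : Integrable (fun t => φ i t * ψ j t) μ :=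
    IntegrableOn.mul_of_bounded measurableSet_Icc measure_Icc_lt_top
      (hφm i).aestronglyMeasurable (hψm j).aestronglyMeasurable (hφb i) (hψb j)
  have hunit : IsUnit (1 - γ • Matrix.of fun i j => ∫ t, φ i t * ψ j t ∂μ).det := by
    rwa [← Matrix.det_transpose, Matrix.transpose_sub, Matrix.transpose_one, Matrix.transpose_smul]
  have hpi (p : ℕ) : (volume : Measure (Fin p → ℝ)).restrict (Set.univ.pi fun _ => Set.Icc x y)
      = Measure.pi fun _ => μ := by
    rw [volume_pi, Measure.restrict_pi_pi]
  have hD := firstFredholmMinor_sum_mul_eq φ ψ hφψ γ hunit l m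
  rw [firstFredholmMinor, Fintype.card_fin, sum_range_eq_add_Ico _ hM,
    integral_det_cons_fin_zero (fun u v => ∑ i, φ i u * ψ i v),
    pow_zero, Nat.factorial_zero, Nat.cast_one, div_one, one_mul] at hD
  beta_reduce
  simp only [hpi]
  rw [← Ico_add_one_right_eq_Icc, Nat.sub_add_cancel (show 1 ≤ M from hM), hD,
    Matrix.dotProduct_mulVec_eq_sum_sum_transpose, Matrix.transpose_nonsing_inv,
    Matrix.transpose_sub, Matrix.transpose_one, Matrix.transpose_smul]

/-- First Fredholm minor for a finite-rank kernel: with `K(λ,μ) = Σᵢ φᵢ(λ)ψᵢ(μ)`,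
`S_{ij} = ∫_x^y φᵢ ψⱼ`, `I_M − γSᵀ` invertible and
`R(λ,μ) = Σ_{i,j} φᵢ(λ) ((I_M − γSᵀ)⁻¹)_{ij} ψⱼ(μ)`, one has for `λ, μ ∈ [x,y]`:
`K(λ,μ) + Σ_{p=1}^{M−1} ((−γ)ᵖ/p!) ∫_{[x,y]ᵖ} det(K(u_r,v_s))_{r,s=0}^{p} dν
  = R(λ,μ) det(I_M − γS)`, where `u₀ = λ, v₀ = μ` and `u_r = v_r = ν_r` for `r ≥ 1`. -/
theorem first_fredholm_minor_finite_rank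
    (x y : ℝ) (hxy : x < y) (M : ℕ) (hM : 0 < M) (γ : ℂ)
    (φ ψ : Fin M → ℝ → ℂ)
    (hφm : ∀ i, Measurable (φ i)) (hψm : ∀ i, Measurable (ψ i))
    (hφb : ∀ i, ∃ C : ℝ, ∀ t ∈ Set.Icc x y, ‖φ i t‖ ≤ C)
    (hψb : ∀ i, ∃ C : ℝ, ∀ t ∈ Set.Icc x y, ‖ψ i t‖ ≤ C)
    (K : ℝ → ℝ → ℂ) (hK : K = fun l m => ∑ i : Fin M, φ i l * ψ i m)
    (S : Matrix (Fin M) (Fin M) ℂ)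
    (hS : S = Matrix.of fun i j : Fin M => ∫ t in Set.Icc x y, φ i t * ψ j t)
    (hinv : IsUnit (1 - γ • S.transpose).det)
    (R : ℝ → ℝ → ℂ)
    (hR : R = fun l m => ∑ i : Fin M, ∑ j : Fin M,
        φ i l * (1 - γ • S.transpose)⁻¹ i j * ψ j m) :
    ∀ l ∈ Set.Icc x y, ∀ m ∈ Set.Icc x y,
      K l m + ∑ p ∈ Finset.Icc 1 (M - 1), ((-γ) ^ p / (p.factorial : ℂ)) *
          ∫ ν in Set.univ.pi (fun _ : Fin p => Set.Icc x y),
            Matrix.det (Matrix.of fun r s : Fin (p + 1) =>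
              K ((Fin.cons l ν : Fin (p + 1) → ℝ) r) ((Fin.cons m ν : Fin (p + 1) → ℝ) s))
        = R l m * Matrix.det (1 - γ • S) :=
  first_fredholm_minor_finite_rank_general x y M hM γ φ ψ hφm hψm hφb hψb K hK S hS hinv R hR
end

section
/- (Jacobi–Anger expansion.) For z ∈ ℝ and k a nonnegative integer define I_k(z) = (1/π) ∫_0^π exp(z·cos τ)·cos(kτ) dτ (the modified Bessel function of the first kind). Then for every θ ∈ ℝ the series I₀(z) + 2·Σ_{k=1}^{∞} I_k(z)·cos(kθ) converges and its sum equals exp(z·cos θ). -/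
/-!
The function `τ ↦ exp (z cos τ)` is smooth and `2π`-periodic, so two integrations by parts
show that its Fourier coefficients are `O(1/n²)`: its Fourier series is absolutely summable and
converges pointwise to it. Since the function is even, its `n`-th Fourier coefficient is the
cosine integral `I_|n|(z)`, and pairing the terms of index `n` and `-n` turns the Fourier series
into `I₀(z) + 2 Σ_{k ≥ 1} I_k(z) cos(kθ)`.
-/

/-- The modified Bessel function of the first kind of integer order `k`:
`I_k(z) = (1/π) ∫_0^π exp(z cos τ) cos(kτ) dτ`. -/
noncomputable def besselI (k : ℕ) (z : ℝ) : ℝ :=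
  (1 / Real.pi) * ∫ τ in Set.Icc 0 Real.pi, Real.exp (z * Real.cos τ) * Real.cos (k * τ)

open MeasureTheory Real Complex Function intervalIntegral

section EvenOdd

variable {E : Type*} [NormedAddCommGroup E] [NormedSpace ℝ E] {f : ℝ → E}

theorem Function.Odd.intervalIntegral_eq_zero (hf : f.Odd) (a : ℝ) :
    ∫ x in -a..a, f x = 0 := by
  have h := integral_comp_neg (a := -a) (b := a) f
  simp only [show ∀ x, f (-x) = -f x from hf, intervalIntegral.integral_neg, neg_neg,
    neg_eq_iff_add_eq_zero, ← two_smul ℝ] at h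
  exact (smul_eq_zero.mp h).resolve_left two_ne_zero

theorem Function.Even.intervalIntegral_eq_two_smul (hf : f.Even) {a : ℝ}
    (hint : IntervalIntegrable f volume (-a) a) :
    ∫ x in -a..a, f x = (2 : ℝ) • ∫ x in 0..a, f x := by
  have h := integral_comp_neg (a := -a) (b := 0) f
  simp only [hf.eq, neg_zero, neg_neg] at h
  have h0 : (0 : ℝ) ∈ Set.uIcc (-a) a := by
    rcases le_total 0 a with ha | ha <;> simp [ha]
  rw [← integral_add_adjacent_intervals (hint.mono_set (Set.uIcc_subset_uIcc_left h0))
    (hint.mono_set (Set.uIcc_subset_uIcc_right h0)), h, two_smul]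

end EvenOdd

theorem Function.Periodic.deriv {E : Type*} [NormedAddCommGroup E] [NormedSpace ℝ E]
    {f : ℝ → E} {T : ℝ} (hf : Periodic f T) : Periodic (_root_.deriv f) T := fun x => by
  rw [← deriv_comp_add_const, funext hf]

section SmoothPeriodic

variable {T : ℝ} [hT : Fact (0 < T)]

theorem norm_fourierCoeff_le {E : Type*} [NormedAddCommGroup E] [NormedSpace ℂ E]
    {g : AddCircle T → E} {M : ℝ} (hg : ∀ x, ‖g x‖ ≤ M) (n : ℤ) :
    ‖fourierCoeff g n‖ ≤ M := by
  have h := norm_integral_le_of_norm_le_const (μ := AddCircle.haarAddCircle)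
    (f := fun x => fourier (-n) x • g x) (C := M) (ae_of_all _ fun x => by
      rw [norm_smul, fourier_apply, Circle.norm_coe, one_mul]; exact hg x)
  rwa [probReal_univ, mul_one] at h

variable {f f' : ℝ → ℂ}

theorem Function.Periodic.fourierCoeff_lift_eq_intervalIntegral (hf : Periodic f T) (n : ℤ) :
    fourierCoeff hf.lift n =
      (1 / T : ℂ) * ∫ x in 0..T, fourier (-n) (x : AddCircle T) * f x := by
  rw [fourierCoeff_eq_intervalIntegral _ _ 0, zero_add, real_smul]
  push_cast
  rfl

theorem Function.Periodic.fourierCoeff_lift_of_hasDerivAt (hf : Periodic f T)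
    (hf' : Periodic f' T) (hderiv : ∀ x, HasDerivAt f (f' x) x) (hcont : Continuous f')
    (n : ℤ) :
    fourierCoeff hf'.lift n = 2 * π * I * n / T * fourierCoeff hf.lift n := by
  have hfourier : Continuous fun x : ℝ => fourier (-n) (x : AddCircle T) :=
    (map_continuous _).comp (AddCircle.continuous_mk' T)
  have hparts := integral_mul_deriv_eq_deriv_mul (a := 0) (b := T)
    (fun x _ => hasDerivAt_fourier_neg T n x) (fun x _ => hderiv x)
    ((continuous_const.mul hfourier).intervalIntegrable _ _) (hcont.intervalIntegrable _ _)
  have hboundary :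
      fourier (-n) (T : AddCircle T) * f T = fourier (-n) ((0 : ℝ) : AddCircle T) * f 0 := by
    rw [AddCircle.coe_period, ← hf 0, zero_add]
    rfl
  rw [hf.fourierCoeff_lift_eq_intervalIntegral, hf'.fourierCoeff_lift_eq_intervalIntegral, hparts,
    hboundary, sub_self, zero_sub]
  simp only [mul_assoc, intervalIntegral.integral_const_mul]
  ring

theorem Function.Periodic.summable_fourierCoeff_lift_of_contDiff (hf : Periodic f T)
    (hsmooth : ContDiff ℝ 2 f) : Summable (fourierCoeff hf.lift) := by
  obtain ⟨hdiff, -, hsmooth'⟩ := (contDiff_succ_iff_deriv (n := 1)).mp hsmooth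
  obtain ⟨hdiff', -, hsmooth''⟩ := (contDiff_succ_iff_deriv (n := 0)).mp hsmooth'
  have hf' := hf.deriv
  have hf'' := hf'.deriv
  have hcoeff (n : ℤ) :
      fourierCoeff hf''.lift n = (2 * π * I * n / T) ^ 2 * fourierCoeff hf.lift n := by
    rw [hf'.fourierCoeff_lift_of_hasDerivAt hf'' (fun x => (hdiff' x).hasDerivAt)
        hsmooth''.continuous,
      hf.fourierCoeff_lift_of_hasDerivAt hf' (fun x => (hdiff x).hasDerivAt) hsmooth'.continuous]
    ring
  obtain ⟨M, hM⟩ := isBounded_iff_forall_norm_le.mp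
    (hf''.isBounded_of_continuous hT.out.ne' hsmooth''.continuous)
  have hbound (n : ℤ) : ‖fourierCoeff hf''.lift n‖ ≤ M := norm_fourierCoeff_le (fun x => by
    induction x using QuotientAddGroup.induction_on with | H x => exact hM _ ⟨x, rfl⟩) n
  refine .of_norm_bounded_eventually
    ((Real.summable_one_div_int_pow.mpr one_lt_two).mul_left (M * (T / (2 * π)) ^ 2)) ?_
  filter_upwards [(Set.finite_singleton (0 : ℤ)).compl_mem_cofinite] with n hn
  have hn : (n : ℝ) ≠ 0 := Int.cast_ne_zero.mpr hn
  have hnorm :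
      ‖fourierCoeff hf''.lift n‖ = (2 * π * n / T) ^ 2 * ‖fourierCoeff hf.lift n‖ := by
    rw [hcoeff, norm_mul, norm_pow]
    simp [abs_of_pos hT.out, abs_of_pos pi_pos, mul_pow, div_pow, sq_abs]
  calc ‖fourierCoeff hf.lift n‖
      = ‖fourierCoeff hf''.lift n‖ * (T / (2 * π)) ^ 2 * (1 / n ^ 2) := by
        rw [hnorm]
        field_simp [hT.out.ne']
    _ ≤ M * (T / (2 * π)) ^ 2 * (1 / n ^ 2) := by gcongr; exact hbound n

theorem Function.Periodic.hasSum_fourier_series_lift_of_contDiff (hf : Periodic f T)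
    (hsmooth : ContDiff ℝ 2 f) (x : ℝ) :
    HasSum (fun n => fourierCoeff hf.lift n • fourier n (x : AddCircle T)) (f x) :=
  has_pointwise_sum_fourier_series_of_summable
    (f := ⟨hf.lift, hsmooth.continuous.quotient_lift _⟩)
    (hf.summable_fourierCoeff_lift_of_contDiff hsmooth) x

end SmoothPeriodic

instance Real.fact_zero_lt_two_pi : Fact (0 < 2 * π) := ⟨two_pi_pos⟩

theorem fourier_coe_apply_two_pi (n : ℤ) (x : ℝ) :
    fourier n (x : AddCircle (2 * π)) = exp ((n * x : ℝ) * I) := by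
  rw [fourier_coe_apply]
  congr 1
  push_cast
  field_simp

theorem fourier_add_fourier_neg_two_pi (n : ℤ) (x : ℝ) :
    fourier n (x : AddCircle (2 * π)) + fourier (-n) (x : AddCircle (2 * π)) =
      ((2 * Real.cos (n * x) : ℝ) : ℂ) := by
  rw [fourier_coe_apply_two_pi, fourier_coe_apply_two_pi, Int.cast_neg, neg_mul, ofReal_neg,
    ← two_cos, ← ofReal_cos]
  norm_cast

theorem besselI_eq_intervalIntegral (k : ℕ) (z : ℝ) :
    besselI k z = (1 / π) * ∫ τ in 0..π, Real.exp (z * Real.cos τ) * Real.cos (k * τ) := by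
  rw [besselI, intervalIntegral.integral_of_le pi_pos.le, integral_Icc_eq_integral_Ioc]

theorem periodic_exp_mul_cos (z : ℝ) :
    Periodic (fun τ : ℝ => (Real.exp (z * Real.cos τ) : ℂ)) (2 * π) := fun τ => by
  simp [Real.cos_add_two_pi]

theorem contDiff_exp_mul_cos (z : ℝ) :
    ContDiff ℝ 2 (fun τ : ℝ => (Real.exp (z * Real.cos τ) : ℂ)) :=
  ofRealCLM.contDiff.comp (by fun_prop : ContDiff ℝ 2 fun τ => Real.exp (z * Real.cos τ))

theorem fourierCoeff_exp_mul_cos (z : ℝ) (n : ℤ) :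
    fourierCoeff (periodic_exp_mul_cos z).lift n = besselI n.natAbs z := by
  set g : ℝ → ℝ := fun x => Real.exp (z * Real.cos x)
  have hintegrand (x : ℝ) :
      fourier (-n) (x : AddCircle (2 * π)) • (periodic_exp_mul_cos z).lift x =
        ((g x * Real.cos (n * x) : ℝ) : ℂ) - ((g x * Real.sin (n * x) : ℝ) : ℂ) * I := by
    rw [fourier_coe_apply_two_pi, Periodic.lift_coe, smul_eq_mul]
    push_cast [g]
    rw [show -(n : ℂ) * x * I = (-(n * x)) * I by ring, exp_mul_I, Complex.cos_neg,
      Complex.sin_neg]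
    ring
  have hsin : ∫ x in -π..π, g x * Real.sin (n * x) = 0 :=
    Function.Odd.intervalIntegral_eq_zero (fun x => by simp [g, mul_neg]) π
  have hcos :
      ∫ x in -π..π, g x * Real.cos (n * x) = 2 * ∫ x in 0..π, g x * Real.cos (n * x) := by
    rw [Function.Even.intervalIntegral_eq_two_smul (fun x => ?_)
      ((by fun_prop : Continuous fun x => g x * Real.cos (n * x)).intervalIntegrable _ _),
      smul_eq_mul]
    simp [g]
  have hnatAbs (x : ℝ) : Real.cos (n.natAbs * x) = Real.cos (n * x) := by
    rcases Int.natAbs_eq n with h | h <;> nth_rewrite 2 [h] <;> simp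
  rw [fourierCoeff_eq_intervalIntegral _ _ (-π), show -π + 2 * π = π by ring]
  simp only [hintegrand]
  rw [intervalIntegral.integral_sub, intervalIntegral.integral_mul_const,
    intervalIntegral.integral_ofReal, intervalIntegral.integral_ofReal, hsin, hcos,
    besselI_eq_intervalIntegral]
  · simp only [hnatAbs, g, real_smul, Complex.ofReal_zero, zero_mul, sub_zero]
    push_cast
    field_simp
  all_goals exact Continuous.intervalIntegrable (by fun_prop) _ _

/-- Jacobi–Anger expansion: for all real `z` and `θ`, the series
`I₀(z) + 2 Σ_{k=1}^{∞} I_k(z) cos(kθ)` converges with sum `exp(z cos θ)`. -/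
theorem jacobi_anger_expansion (z θ : ℝ) :
    HasSum (fun k : ℕ => 2 * besselI (k + 1) z * Real.cos ((k + 1) * θ))
      (Real.exp (z * Real.cos θ) - besselI 0 z) := by
  have hf := periodic_exp_mul_cos z
  have hpair (n : ℕ) : fourierCoeff hf.lift n • fourier n (θ : AddCircle (2 * π)) +
      fourierCoeff hf.lift (-n) • fourier (-n) (θ : AddCircle (2 * π)) =
      ((2 * besselI n z * Real.cos (n * θ) : ℝ) : ℂ) := by
    rw [fourierCoeff_exp_mul_cos, fourierCoeff_exp_mul_cos, Int.natAbs_neg, Int.natAbs_natCast,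
      smul_eq_mul, smul_eq_mul, ← mul_add, fourier_add_fourier_neg_two_pi]
    push_cast
    ring
  have hseries :=
    (hf.hasSum_fourier_series_lift_of_contDiff (contDiff_exp_mul_cos z) θ).nat_add_neg
  have hcosine : HasSum (fun n : ℕ => 2 * besselI n z * Real.cos (n * θ))
      (Real.exp (z * Real.cos θ) + besselI 0 z) := by
    rw [← hasSum_ofReal]
    convert hseries using 1
    · exact funext fun n => (hpair n).symm
    · simp [fourierCoeff_exp_mul_cos]
  have hshift := (hasSum_nat_add_iff' 1).mpr hcosine
  simp only [Finset.sum_range_one, Nat.cast_zero, zero_mul, Real.cos_zero, mul_one, Nat.cast_add,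
    Nat.cast_one] at hshift
  rwa [show Real.exp (z * Real.cos θ) + besselI 0 z - 2 * besselI 0 z =
    Real.exp (z * Real.cos θ) - besselI 0 z by ring] at hshift
end

section
/- Let ω₀ > 0 and ω₁ > 0 be real numbers and set ε = ω₀²/ω₁² − 1. Then the function b : ℝ → ℝ defined by b(t) = √(1 + ε·sin²(ω₁ t)) is twice differentiable, strictly positive, and satisfies the Ermakov–Pinney equation b''(t) + ω₁²·b(t) = ω₀² / b(t)³ for all t ∈ ℝ, together with the initial conditions b(0) = 1 and b'(0) = 0. -/
/-!
The amplitude `ρ = √(x² + y²)` of two solutions of `x'' + ω² x = 0` solves Pinney's equation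
`ρ'' + ω² ρ = W² / ρ³`, where `W = x y' - x' y` is their Wronskian: differentiate `ρ² = x² + y²`
twice and use Lagrange's identity `(x² + y²)(x'² + y'²) - (x x' + y y')² = W²`.
Here `b` is the amplitude of `cos (ω₁ t)` and `(ω₀ / ω₁) sin (ω₁ t)`, whose Wronskian is `ω₀`.
-/

open Real

theorem hasDerivAt_sqrt_sq_add_sq {x y : ℝ → ℝ} {x' y' t : ℝ}
    (hx : HasDerivAt x x' t) (hy : HasDerivAt y y' t) (hne : x t ^ 2 + y t ^ 2 ≠ 0) :
    HasDerivAt (fun s => √(x s ^ 2 + y s ^ 2))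
      ((x t * x' + y t * y') / √(x t ^ 2 + y t ^ 2)) t := by
  convert ((hx.fun_pow 2).fun_add (hy.fun_pow 2)).sqrt hne using 1
  field_simp
  ring

theorem pinney_amplitude {ω : ℝ} {x y x' y' : ℝ → ℝ}
    (hx : ∀ t, HasDerivAt x (x' t) t) (hy : ∀ t, HasDerivAt y (y' t) t)
    (hx' : ∀ t, HasDerivAt x' (-(ω ^ 2 * x t)) t) (hy' : ∀ t, HasDerivAt y' (-(ω ^ 2 * y t)) t)
    (hne : ∀ t, x t ^ 2 + y t ^ 2 ≠ 0) :
    ∃ ρ'' : ℝ → ℝ,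
      (∀ t, HasDerivAt (fun s => (x s * x' s + y s * y' s) / √(x s ^ 2 + y s ^ 2)) (ρ'' t) t) ∧
      ∀ t, ρ'' t + ω ^ 2 * √(x t ^ 2 + y t ^ 2) =
        (x t * y' t - x' t * y t) ^ 2 / √(x t ^ 2 + y t ^ 2) ^ 3 := by
  have hρ t := hasDerivAt_sqrt_sq_add_sq (hx t) (hy t) (hne t)
  have hv t : HasDerivAt (fun s => x s * x' s + y s * y' s)
      (x' t ^ 2 + y' t ^ 2 - ω ^ 2 * (x t ^ 2 + y t ^ 2)) t :=
    (((hx t).fun_mul (hx' t)).fun_add ((hy t).fun_mul (hy' t))).congr_deriv (by ring)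
  have hρ_ne t : √(x t ^ 2 + y t ^ 2) ≠ 0 := sqrt_ne_zero'.2 ((hne t).symm.lt_of_le (by positivity))
  refine ⟨_, fun t => (hv t).div (hρ t) (hρ_ne t), fun t => ?_⟩
  have hsq : √(x t ^ 2 + y t ^ 2) ^ 2 = x t ^ 2 + y t ^ 2 := sq_sqrt (by positivity)
  field_simp [hρ_ne t]
  linear_combination (x' t ^ 2 + y' t ^ 2 - ω ^ 2 * (x t ^ 2 + y t ^ 2) +
    ω ^ 2 * (√(x t ^ 2 + y t ^ 2) ^ 2 + (x t ^ 2 + y t ^ 2))) * hsq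

theorem cos_sq_add_mul_sin_sq_pos {c : ℝ} (hc : 0 < c) (θ : ℝ) : 0 < cos θ ^ 2 + c * sin θ ^ 2 := by
  nlinarith [sin_sq_add_cos_sq θ, sq_nonneg (cos θ), mul_nonneg hc.le (sq_nonneg (sin θ))]

theorem hasDerivAt_sin_mul (ω t : ℝ) : HasDerivAt (fun s => sin (ω * s)) (ω * cos (ω * t)) t :=
  (((hasDerivAt_id' t).const_mul ω).sin).congr_deriv (by ring)

theorem hasDerivAt_cos_mul (ω t : ℝ) : HasDerivAt (fun s => cos (ω * s)) (-(ω * sin (ω * t))) t :=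
  (((hasDerivAt_id' t).const_mul ω).cos).congr_deriv (by ring)

/-- For `ω₀, ω₁ > 0` and `ε = ω₀²/ω₁² − 1`, the function
`b(t) = √(1 + ε sin²(ω₁ t))` is strictly positive, twice differentiable, and solves
the Ermakov–Pinney equation `b'' + ω₁² b = ω₀²/b³` with `b(0) = 1`, `b'(0) = 0`. -/
theorem ermakov_pinney_frequency_quench
    (ω₀ ω₁ : ℝ) (h0 : 0 < ω₀) (h1 : 0 < ω₁)
    (b : ℝ → ℝ)
    (hb : b = fun t => Real.sqrt (1 + (ω₀ ^ 2 / ω₁ ^ 2 - 1) * Real.sin (ω₁ * t) ^ 2)) :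
    (∀ t, 0 < b t) ∧
      ∃ b' b'' : ℝ → ℝ,
        (∀ t, HasDerivAt b (b' t) t) ∧
        (∀ t, HasDerivAt b' (b'' t) t) ∧
        (∀ t, b'' t + ω₁ ^ 2 * b t = ω₀ ^ 2 / (b t) ^ 3) ∧
        b 0 = 1 ∧ b' 0 = 0 := by
  have hω₁ : ω₁ ≠ 0 := h1.ne'
  have hb_amp : b = fun t => √(cos (ω₁ * t) ^ 2 + (ω₀ / ω₁ * sin (ω₁ * t)) ^ 2) := by
    rw [hb]
    funext t
    congr 1
    linear_combination -sin_sq_add_cos_sq (ω₁ * t)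
  have hne t : cos (ω₁ * t) ^ 2 + (ω₀ / ω₁ * sin (ω₁ * t)) ^ 2 ≠ 0 := by
    rw [mul_pow]
    exact (cos_sq_add_mul_sin_sq_pos (by positivity) _).ne'
  have hW t : cos (ω₁ * t) * (ω₀ * cos (ω₁ * t)) - -(ω₁ * sin (ω₁ * t)) * (ω₀ / ω₁ * sin (ω₁ * t))
      = ω₀ := by
    field_simp
    linear_combination sin_sq_add_cos_sq (ω₁ * t)
  have hx t := hasDerivAt_cos_mul ω₁ t
  have hx' t : HasDerivAt (fun s => -(ω₁ * sin (ω₁ * s))) (-(ω₁ ^ 2 * cos (ω₁ * t))) t :=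
    ((hasDerivAt_sin_mul ω₁ t).const_mul ω₁).neg.congr_deriv (by ring)
  have hy t : HasDerivAt (fun s => ω₀ / ω₁ * sin (ω₁ * s)) (ω₀ * cos (ω₁ * t)) t :=
    ((hasDerivAt_sin_mul ω₁ t).const_mul (ω₀ / ω₁)).congr_deriv (by field_simp)
  have hy' t : HasDerivAt (fun s => ω₀ * cos (ω₁ * s)) (-(ω₁ ^ 2 * (ω₀ / ω₁ * sin (ω₁ * t)))) t :=
    ((hasDerivAt_cos_mul ω₁ t).const_mul ω₀).congr_deriv (by field_simp)
  obtain ⟨b'', hb'', hode⟩ := pinney_amplitude hx hy hx' hy' hne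
  subst hb_amp
  refine ⟨fun t => sqrt_pos.2 ((hne t).symm.lt_of_le (by positivity)), _, b'',
    fun t => hasDerivAt_sqrt_sq_add_sq (hx t) (hy t) (hne t), hb'', fun t => ?_, by simp, by simp⟩
  rw [hode, hW]
end

section
/- (Scaling solution of the time-dependent harmonic Schrödinger equation.) Let m > 0, ω₀ > 0, E ∈ ℝ, and let ω : ℝ → ℝ be continuous. Let φ : ℝ → ℂ be twice differentiable and satisfy the stationary Schrödinger equation −(1/(2m))·φ''(z) + (m ω₀² z²/2)·φ(z) = E·φ(z) for all z ∈ ℝ. Let b : ℝ → ℝ be twice differentiable, strictly positive, and satisfy b''(t) + ω(t)²·b(t) = ω₀²/b(t)³, and set τ(t) = ∫_0^t ds / b(s)². Define Φ(z,t) = b(t)^{−1/2} · φ(z / b(t)) · exp( i·m·z²·b'(t) / (2 b(t)) − i·E·τ(t) ). Then Φ solves the time-dependent Schrödinger equation: i·∂Φ/∂t (z,t) = −(1/(2m))·∂²Φ/∂z² (z,t) + (m ω(t)² z²/2)·Φ(z,t) for all z, t ∈ ℝ (with ħ = 1). -/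
/-!
Write `Φ = P · φ(z/b)` with the prefactor `P = b^{-1/2} exp(i m z² b'/(2b) - i E τ)`. Every
derivative of `Φ` is `P` times a combination of `φ, φ', φ''` at `z/b`, so after dividing by `P`
the Schrödinger equation becomes an identity between these values: the `φ'` terms and the
`b'/b` terms cancel identically, the stationary equation at `z/b` eliminates `φ''`, and what is
left vanishes exactly because `b'' = ω₀²/b³ - ω² b`.
-/

open Complex

theorem HasDerivAt.comp_div_const {φ : ℝ → ℂ} {φ' : ℂ} {z : ℝ} (β : ℝ)
    (hφ : HasDerivAt φ φ' (z / β)) : HasDerivAt (fun w => φ (w / β)) (φ' / β) z := by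
  simpa [real_smul, div_eq_inv_mul, mul_comm, Function.comp_def] using
    hφ.scomp z ((hasDerivAt_id z).div_const β)

theorem HasDerivAt.comp_const_div {φ : ℝ → ℂ} {φ' : ℂ} {b : ℝ → ℝ} {b' z t : ℝ}
    (hφ : HasDerivAt φ φ' (z / b t)) (hb : HasDerivAt b b' t) (hb0 : b t ≠ 0) :
    HasDerivAt (fun s => φ (z / b s)) (-(z * b' / b t ^ 2 : ℝ) * φ') t := by
  have hquot : HasDerivAt (fun s => z / b s) (-(z * b') / b t ^ 2) t := by
    simpa using (hasDerivAt_const t z).fun_div hb hb0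
  simpa [real_smul, Function.comp_def, neg_div] using hφ.scomp t hquot

theorem HasDerivAt.one_div_sqrt {b : ℝ → ℝ} {b' t : ℝ} (hb : HasDerivAt b b' t)
    (hbt : 0 < b t) :
    HasDerivAt (fun s => 1 / √(b s)) (-(b' / (2 * b t)) * (1 / √(b t))) t := by
  have hsqrt : √(b t) ≠ 0 := Real.sqrt_ne_zero'.mpr hbt
  refine ((hasDerivAt_const t 1).div (hb.sqrt hbt.ne') hsqrt).congr_deriv ?_
  rw [Real.sq_sqrt hbt.le]
  field_simp
  ring

theorem Complex.hasDerivAt_ofReal (z : ℝ) : HasDerivAt (fun w : ℝ => (w : ℂ)) 1 z := by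
  simpa using (hasDerivAt_id z).ofReal_comp

noncomputable def scalingPrefactor (m E : ℝ) (b b' τ : ℝ → ℝ) (z t : ℝ) : ℂ :=
  ((1 / √(b t) : ℝ) : ℂ) * cexp (I * m * z ^ 2 * b' t / (2 * b t) - I * E * τ t)

section ScalingAnsatz

variable {m E : ℝ} {φ φ' : ℝ → ℂ} {b b' b'' τ : ℝ → ℝ}

theorem hasDerivAt_scalingPrefactor_space (z t : ℝ) :
    HasDerivAt (fun w => scalingPrefactor m E b b' τ w t)
      (scalingPrefactor m E b b' τ z t * (I * m * z * b' t / b t)) z := by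
  have hphase := (((((hasDerivAt_ofReal z).fun_pow 2).const_mul (I * m)).mul_const
    (b' t : ℂ)).div_const (2 * b t)).sub_const (I * E * τ t)
  refine (hphase.cexp.const_mul ((1 / √(b t) : ℝ) : ℂ)).congr_deriv ?_
  simp only [scalingPrefactor]
  push_cast
  ring

theorem hasDerivAt_scalingPrefactor_time {z t : ℝ} (hbt : 0 < b t) (hb : HasDerivAt b (b' t) t)
    (hb' : HasDerivAt b' (b'' t) t) (hτ : HasDerivAt τ (1 / b t ^ 2) t) :
    HasDerivAt (fun s => scalingPrefactor m E b b' τ z s)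
      (scalingPrefactor m E b b' τ z t * (-(b' t / (2 * b t) : ℝ)
        + I * m * z ^ 2 * (b'' t * b t - b' t ^ 2) / (2 * b t ^ 2) - I * E / b t ^ 2)) t := by
  have hbC : (b t : ℂ) ≠ 0 := ofReal_ne_zero.mpr hbt.ne'
  have hchirp := (hb'.ofReal_comp.const_mul (I * m * z ^ 2)).fun_div
    (hb.ofReal_comp.const_mul 2) (mul_ne_zero two_ne_zero hbC)
  have hphase := hchirp.fun_sub (hτ.ofReal_comp.const_mul (I * E))
  refine ((hb.one_div_sqrt hbt).ofReal_comp.fun_mul hphase.cexp).congr_deriv ?_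
  simp only [scalingPrefactor]
  push_cast
  field_simp
  ring

theorem hasDerivAt_scalingAnsatz_time {z t : ℝ} (hφ : HasDerivAt φ (φ' (z / b t)) (z / b t))
    (hbt : 0 < b t) (hb : HasDerivAt b (b' t) t) (hb' : HasDerivAt b' (b'' t) t)
    (hτ : HasDerivAt τ (1 / b t ^ 2) t) :
    HasDerivAt (fun s => scalingPrefactor m E b b' τ z s * φ (z / b s))
      (scalingPrefactor m E b b' τ z t * ((-(b' t / (2 * b t) : ℝ)
        + I * m * z ^ 2 * (b'' t * b t - b' t ^ 2) / (2 * b t ^ 2) - I * E / b t ^ 2)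
          * φ (z / b t) + -(z * b' t / b t ^ 2 : ℝ) * φ' (z / b t))) t :=
  ((hasDerivAt_scalingPrefactor_time hbt hb hb' hτ).mul
    (hφ.comp_const_div hb hbt.ne')).congr_deriv (by ring)

theorem hasDerivAt_scalingAnsatz_space {z t : ℝ} (hφ : HasDerivAt φ (φ' (z / b t)) (z / b t)) :
    HasDerivAt (fun w => scalingPrefactor m E b b' τ w t * φ (w / b t))
      (scalingPrefactor m E b b' τ z t *
        (φ' (z / b t) / b t + I * m * z * b' t / b t * φ (z / b t))) z :=
  ((hasDerivAt_scalingPrefactor_space z t).mul (hφ.comp_div_const _)).congr_deriv (by ring)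

theorem hasDerivAt_scalingAnsatz_space_two {φ'' : ℂ} {z t : ℝ}
    (hφ : HasDerivAt φ (φ' (z / b t)) (z / b t)) (hφ' : HasDerivAt φ' φ'' (z / b t)) :
    HasDerivAt (fun w => scalingPrefactor m E b b' τ w t *
        (φ' (w / b t) / b t + I * m * w * b' t / b t * φ (w / b t)))
      (scalingPrefactor m E b b' τ z t * (I * m * z * b' t / b t * (φ' (z / b t) / b t
          + I * m * z * b' t / b t * φ (z / b t))
        + (φ'' / b t / b t + I * m * b' t / b t * φ (z / b t)
          + I * m * z * b' t / b t * (φ' (z / b t) / b t)))) z := by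
  have hcoeff : HasDerivAt (fun w : ℝ => I * m * w * b' t / b t) (I * m * b' t / b t) z := by
    simpa using (((hasDerivAt_ofReal z).const_mul (I * m)).mul_const (b' t : ℂ)).div_const
      (b t : ℂ)
  have hbracket := ((hφ'.comp_div_const _).div_const (b t : ℂ)).fun_add
    (hcoeff.fun_mul (hφ.comp_div_const _))
  exact ((hasDerivAt_scalingPrefactor_space z t).mul hbracket).congr_deriv (by ring)

end ScalingAnsatz

theorem reduced_schrodinger_of_stationary_of_ermakov {m E ω₀ ω z β β'' : ℝ} {p p'' : ℂ}
    (β' : ℝ) (p' : ℂ) (hm : m ≠ 0) (hβ : β ≠ 0)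
    (hp : -(1 / (2 * (m : ℂ))) * p'' + ((m * ω₀ ^ 2 * (z / β) ^ 2 / 2 : ℝ) : ℂ) * p
      = E * p)
    (hβeq : β'' + ω ^ 2 * β = ω₀ ^ 2 / β ^ 3) :
    I * ((-(β' / (2 * β) : ℝ) + I * m * z ^ 2 * (β'' * β - β' ^ 2) / (2 * β ^ 2)
          - I * E / β ^ 2) * p + -(z * β' / β ^ 2 : ℝ) * p')
      = -(1 / (2 * (m : ℂ))) * (I * m * z * β' / β * (p' / β + I * m * z * β' / β * p)
          + (p'' / β / β + I * m * β' / β * p + I * m * z * β' / β * (p' / β)))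
        + ((m * ω ^ 2 * z ^ 2 / 2 : ℝ) : ℂ) * p := by
  have hβC : (β : ℂ) ≠ 0 := ofReal_ne_zero.mpr hβ
  have hmC : (m : ℂ) ≠ 0 := ofReal_ne_zero.mpr hm
  have hp'' : p'' = (m ^ 2 * ω₀ ^ 2 * z ^ 2 / β ^ 2 - 2 * m * E) * p := by
    push_cast at hp
    field_simp at hp ⊢
    linear_combination -hp
  have hβ'' : (β'' : ℂ) = ω₀ ^ 2 / β ^ 3 - ω ^ 2 * β := by
    rw [eq_sub_iff_add_eq]; exact_mod_cast hβeq
  rw [hp'', hβ'']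
  push_cast
  field_simp
  ring_nf
  rw [I_sq]
  ring

theorem scaling_solution_time_dependent_harmonic_oscillator_general
    (m ω₀ : ℝ) (hm : 0 < m) (E : ℝ)
    (ω : ℝ → ℝ)
    (φ φ' φ'' : ℝ → ℂ)
    (hφ' : ∀ z, HasDerivAt φ (φ' z) z)
    (hφ'' : ∀ z, HasDerivAt φ' (φ'' z) z)
    (hφeq : ∀ z : ℝ, -(1 / (2 * (m : ℂ))) * φ'' z + ((m * ω₀ ^ 2 * z ^ 2 / 2 : ℝ) : ℂ) * φ z
      = (E : ℂ) * φ z)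
    (b b' b'' : ℝ → ℝ) (hbpos : ∀ t, 0 < b t)
    (hb' : ∀ t, HasDerivAt b (b' t) t)
    (hb'' : ∀ t, HasDerivAt b' (b'' t) t)
    (hbeq : ∀ t, b'' t + (ω t) ^ 2 * b t = ω₀ ^ 2 / (b t) ^ 3)
    (τ : ℝ → ℝ) (hτ : τ = fun t => ∫ s in (0 : ℝ)..t, 1 / (b s) ^ 2)
    (Φ : ℝ → ℝ → ℂ)
    (hΦ : Φ = fun z t => ((1 / Real.sqrt (b t) : ℝ) : ℂ) * φ (z / b t) *
        Complex.exp (Complex.I * (m : ℂ) * (z : ℂ) ^ 2 * (b' t : ℂ) / (2 * (b t : ℂ))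
          - Complex.I * (E : ℂ) * (τ t : ℂ))) :
    ∃ Φt Φz Φzz : ℝ → ℝ → ℂ,
      (∀ z t, HasDerivAt (fun s => Φ z s) (Φt z t) t) ∧
      (∀ z t, HasDerivAt (fun w => Φ w t) (Φz z t) z) ∧
      (∀ z t, HasDerivAt (fun w => Φz w t) (Φzz z t) z) ∧
      (∀ z t, Complex.I * Φt z t
        = -(1 / (2 * (m : ℂ))) * Φzz z t + ((m * (ω t) ^ 2 * z ^ 2 / 2 : ℝ) : ℂ) * Φ z t) := by
  have hτ' : ∀ t, HasDerivAt τ (1 / b t ^ 2) t := by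
    have hb : Continuous b := continuous_iff_continuousAt.2 fun t => (hb' t).continuousAt
    subst hτ
    have hint : Continuous fun s => 1 / b s ^ 2 :=
      continuous_const.div (hb.pow 2) fun s => pow_ne_zero 2 (hbpos s).ne'
    exact fun t => (hint.integral_hasStrictDerivAt 0 t).hasDerivAt
  obtain rfl : Φ = fun z t => scalingPrefactor m E b b' τ z t * φ (z / b t) := by
    subst hΦ
    funext z t
    rw [scalingPrefactor]
    ring
  exact ⟨_, _, _,
    fun z t => hasDerivAt_scalingAnsatz_time (hφ' _) (hbpos t) (hb' t) (hb'' t) (hτ' t),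
    fun z t => hasDerivAt_scalingAnsatz_space (hφ' _),
    fun z t => hasDerivAt_scalingAnsatz_space_two (hφ' _) (hφ'' _),
    fun z t => by
      linear_combination scalingPrefactor m E b b' τ z t *
        reduced_schrodinger_of_stationary_of_ermakov (b' t) (φ' (z / b t)) hm.ne' (hbpos t).ne'
          (hφeq (z / b t)) (hbeq t)⟩

/-- Scaling solution of the time-dependent harmonic Schrödinger equation: if `φ` is a
stationary state of the harmonic oscillator with frequency `ω₀` and energy `E`, and `b`
solves the Ermakov–Pinney equation `b'' + ω(t)² b = ω₀²/b³` with `b > 0`, then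
`Φ(z,t) = b(t)^{−1/2} φ(z/b(t)) exp(i m z² b'(t)/(2b(t)) − i E τ(t))`, with
`τ(t) = ∫_0^t ds/b(s)²`, solves `i ∂Φ/∂t = −(1/2m) ∂²Φ/∂z² + (m ω(t)² z²/2) Φ`. -/
theorem scaling_solution_time_dependent_harmonic_oscillator
    (m ω₀ : ℝ) (hm : 0 < m) (hω₀ : 0 < ω₀) (E : ℝ)
    (ω : ℝ → ℝ) (hω : Continuous ω)
    (φ φ' φ'' : ℝ → ℂ)
    (hφ' : ∀ z, HasDerivAt φ (φ' z) z)
    (hφ'' : ∀ z, HasDerivAt φ' (φ'' z) z)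
    (hφeq : ∀ z : ℝ, -(1 / (2 * (m : ℂ))) * φ'' z + ((m * ω₀ ^ 2 * z ^ 2 / 2 : ℝ) : ℂ) * φ z
      = (E : ℂ) * φ z)
    (b b' b'' : ℝ → ℝ) (hbpos : ∀ t, 0 < b t)
    (hb' : ∀ t, HasDerivAt b (b' t) t)
    (hb'' : ∀ t, HasDerivAt b' (b'' t) t)
    (hbeq : ∀ t, b'' t + (ω t) ^ 2 * b t = ω₀ ^ 2 / (b t) ^ 3)
    (τ : ℝ → ℝ) (hτ : τ = fun t => ∫ s in (0 : ℝ)..t, 1 / (b s) ^ 2)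
    (Φ : ℝ → ℝ → ℂ)
    (hΦ : Φ = fun z t => ((1 / Real.sqrt (b t) : ℝ) : ℂ) * φ (z / b t) *
        Complex.exp (Complex.I * (m : ℂ) * (z : ℂ) ^ 2 * (b' t : ℂ) / (2 * (b t : ℂ))
          - Complex.I * (E : ℂ) * (τ t : ℂ))) :
    ∃ Φt Φz Φzz : ℝ → ℝ → ℂ,
      (∀ z t, HasDerivAt (fun s => Φ z s) (Φt z t) t) ∧
      (∀ z t, HasDerivAt (fun w => Φ w t) (Φz z t) z) ∧
      (∀ z t, HasDerivAt (fun w => Φz w t) (Φzz z t) z) ∧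
      (∀ z t, Complex.I * Φt z t
        = -(1 / (2 * (m : ℂ))) * Φzz z t + ((m * (ω t) ^ 2 * z ^ 2 / 2 : ℝ) : ℂ) * Φ z t) :=
  scaling_solution_time_dependent_harmonic_oscillator_general m ω₀ hm E ω φ φ' φ'' hφ' hφ'' hφeq b
    b' b'' hbpos hb' hb'' hbeq τ hτ Φ hΦ
end

section
/- (Exchange statistics under the Anyon–Fermi mapping.) Let ε : ℝ → ℝ be the sign function, ε(x) = x/|x| for x ≠ 0 and ε(0) = 0, and let κ ∈ ℝ. Let ψ_F : ℝᴺ → ℂ be antisymmetric, i.e. for every transposition of two coordinates ψ_F changes sign. Define ψ_A(z₁,…,z_N) = ( ∏_{1 ≤ j < k ≤ N} exp( i(πκ/2)·ε(z_j − z_k) ) ) · ( ∏_{1 ≤ k < j ≤ N} ε(z_j − z_k) ) · ψ_F(z₁,…,z_N). Then for every index i ∈ {1,…,N−1} and every point with z_i ≠ z_{i+1}: ψ_A(…, z_i, z_{i+1}, …) = exp( iπκ·ε(z_i − z_{i+1}) ) · ψ_A(…, z_{i+1}, z_i, …), where on the right-hand side the arguments in positions i and i+1 are swapped and all other arguments are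 unchanged. -/
/-!
`ψ_A` is `ψ_F` times a product, over the pairs `j < k`, of a two-body factor depending on
`z_j, z_k`. The transposition of two adjacent indices `i, i + 1` permutes all pairs other than
`(i, i + 1)` among themselves and reverses that one pair; reversing it multiplies the
two-body factor by `-exp(iπκ ε(z_i - z_{i+1}))⁻¹`, and the sign cancels against the
antisymmetry of `ψ_F`.
-/

open Finset

section AdjacentTransposition

variable {α : Type*} [LinearOrder α] {i j : α}

theorem Equiv.swap_lt_swap_of_covBy (hij : i ⋖ j) {a b : α} (hab : a < b)
    (hne : (a, b) ≠ (i, j)) :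
    Equiv.swap i j a < Equiv.swap i j b := by
  have hlt := hij.lt
  by_cases hai : a = i
  · subst hai
    have hjb : j < b := lt_of_le_of_ne (hij.ge_of_gt hab) fun h => hne (by rw [h])
    rwa [Equiv.swap_apply_left, Equiv.swap_apply_of_ne_of_ne hab.ne' hjb.ne']
  by_cases haj : a = j
  · subst haj
    rw [Equiv.swap_apply_right, Equiv.swap_apply_of_ne_of_ne (hlt.trans hab).ne' hab.ne']
    exact hlt.trans hab
  rw [Equiv.swap_apply_of_ne_of_ne hai haj]
  by_cases hbi : b = i
  · rw [hbi, Equiv.swap_apply_left]; exact (hbi ▸ hab).trans hlt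
  by_cases hbj : b = j
  · rw [hbj, Equiv.swap_apply_right]; exact lt_of_le_of_ne (hij.le_of_lt (hbj ▸ hab)) hai
  rwa [Equiv.swap_apply_of_ne_of_ne hbi hbj]

variable [Fintype α]

theorem swap_mem_erase_ascending_pairs (hij : i ⋖ j) {p : α × α}
    (hp : p ∈ (univ.filter fun q : α × α => q.1 < q.2).erase (i, j)) :
    (Equiv.swap i j p.1, Equiv.swap i j p.2) ∈
      (univ.filter fun q : α × α => q.1 < q.2).erase (i, j) := by
  simp only [mem_erase, mem_filter, mem_univ, true_and] at hp ⊢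
  refine ⟨fun h => ?_, Equiv.swap_lt_swap_of_covBy hij hp.2 hp.1⟩
  rw [Prod.ext_iff, Equiv.swap_apply_eq_iff, Equiv.swap_apply_eq_iff, Equiv.swap_apply_left,
    Equiv.swap_apply_right] at h
  exact (hp.2.trans (h.2 ▸ h.1 ▸ hij.lt)).false

theorem prod_ascending_pairs_eq_mul_prod_erase {M : Type*} [CommMonoid M] (hij : i < j)
    (f : α × α → M) :
    ∏ p ∈ univ.filter (fun q : α × α => q.1 < q.2), f p =
      f (i, j) * ∏ p ∈ (univ.filter fun q : α × α => q.1 < q.2).erase (i, j), f p :=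
  (mul_prod_erase _ f (mem_filter.2 ⟨mem_univ _, hij⟩)).symm

theorem prod_swap_ascending_pairs {M : Type*} [CommMonoid M] (hij : i ⋖ j) (f : α × α → M) :
    ∏ p ∈ univ.filter (fun q : α × α => q.1 < q.2),
        f (Equiv.swap i j p.1, Equiv.swap i j p.2) =
      f (j, i) * ∏ p ∈ (univ.filter fun q : α × α => q.1 < q.2).erase (i, j), f p := by
  rw [prod_ascending_pairs_eq_mul_prod_erase hij.lt, Equiv.swap_apply_left,
    Equiv.swap_apply_right]
  congr 1
  exact prod_nbij' _ _ (fun p hp => swap_mem_erase_ascending_pairs hij hp)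
    (fun p hp => swap_mem_erase_ascending_pairs hij hp) (by simp) (by simp) (fun _ _ => rfl)

end AdjacentTransposition

theorem Real.sign_sub_comm (x y : ℝ) : Real.sign (y - x) = -Real.sign (x - y) := by
  rw [← neg_sub, Real.sign_neg]

noncomputable def anyonPairFactor (κ x y : ℝ) : ℂ :=
  Complex.exp (Complex.I * (Real.pi * κ / 2) * (Real.sign (x - y) : ℂ)) *
    ((Real.sign (y - x) : ℝ) : ℂ)

theorem anyonPairFactor_swap (κ x y : ℝ) :
    anyonPairFactor κ x y =
      -(Complex.exp (Complex.I * Real.pi * κ * (Real.sign (x - y) : ℂ)) *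
        anyonPairFactor κ y x) := by
  simp only [anyonPairFactor, Real.sign_sub_comm x y, Complex.ofReal_neg]
  set s : ℂ := (Real.sign (x - y) : ℂ)
  have hphase : Complex.exp (Complex.I * Real.pi * κ * s) *
      Complex.exp (Complex.I * (Real.pi * κ / 2) * -s) =
      Complex.exp (Complex.I * (Real.pi * κ / 2) * s) := by
    rw [← Complex.exp_add]; ring_nf
  linear_combination s * hphase

/-- Exchange statistics under the Anyon–Fermi mapping: if `ψF` is antisymmetric and
`ψA(z) = (∏_{j<k} exp(i(πκ/2) ε(z_j − z_k))) (∏_{k<j} ε(z_j − z_k)) ψF(z)`, then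
swapping two adjacent coordinates with `z_i ≠ z_{i+1}` produces the anyonic exchange
phase: `ψA(…, z_i, z_{i+1}, …) = exp(iπκ ε(z_i − z_{i+1})) ψA(…, z_{i+1}, z_i, …)`. -/
theorem anyon_fermi_mapping_exchange_statistics
    (N : ℕ) (κ : ℝ) (ψF : (Fin N → ℝ) → ℂ)
    (hanti : ∀ (i j : Fin N), i ≠ j → ∀ z : Fin N → ℝ,
      ψF (z ∘ Equiv.swap i j) = -ψF z)
    (ψA : (Fin N → ℝ) → ℂ)
    (hψA : ψA = fun z =>
      (∏ p ∈ Finset.univ.filter (fun p : Fin N × Fin N => p.1 < p.2),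
          Complex.exp (Complex.I * (Real.pi * κ / 2) * (Real.sign (z p.1 - z p.2) : ℂ))) *
        (∏ p ∈ Finset.univ.filter (fun p : Fin N × Fin N => p.1 < p.2),
          ((Real.sign (z p.2 - z p.1) : ℝ) : ℂ)) * ψF z) :
    ∀ (z : Fin N → ℝ) (i j : Fin N), (j : ℕ) = (i : ℕ) + 1 → z i ≠ z j →
      ψA z = Complex.exp (Complex.I * Real.pi * κ * (Real.sign (z i - z j) : ℂ)) *
        ψA (z ∘ Equiv.swap i j) := by
  intro z i j hij _
  have hcov : i ⋖ j := Fin.covBy_iff.2 (Nat.covBy_iff_add_one_eq.2 hij.symm)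
  have hψA_prod : ∀ w, ψA w = (∏ p ∈ univ.filter (fun p : Fin N × Fin N => p.1 < p.2),
      anyonPairFactor κ (w p.1) (w p.2)) * ψF w := fun w => by
    simp only [hψA, ← prod_mul_distrib]; rfl
  rw [hψA_prod, hψA_prod, hanti i j hcov.lt.ne z]
  simp only [Function.comp_apply]
  rw [prod_swap_ascending_pairs hcov (fun p => anyonPairFactor κ (z p.1) (z p.2)),
    prod_ascending_pairs_eq_mul_prod_erase hcov.lt, anyonPairFactor_swap κ (z i)]
  ring
end
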